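/- arXiv:1309.2094 — 12 statements merged into one kernel-verified Lean document; each statement's English description precedes it below -/
import Mathlib

section
/- If f : ℝⁿ → ℝ is convex with full domain (everywhere finite), then its convex conjugate f* is coercive, i.e., f*(x*)/‖x*‖₂ → ∞ as ‖x*‖₂ → ∞. -/
open scoped RealInnerProductSpace
open Filter Metric

/-!
A finite convex function on `ℝⁿ` is continuous, hence bounded above, say by `C`, on the closed
ball of radius `M`. Testing the supremum defining `f*(x*)` at the point `M x* / ‖x*‖` of that ball
gives `f*(x*) ≥ M ‖x*‖ - C`, so `f*(x*) / ‖x*‖ ≥ M - C / ‖x*‖`, which exceeds `M - 1` far out.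
As `M` is arbitrary, `f*(x*) / ‖x*‖ → ∞`.
-/

theorem ConvexOn.bddAbove_image_closedBall {E : Type*} [NormedAddCommGroup E] [NormedSpace ℝ E]
    [FiniteDimensional ℝ E] {f : E → ℝ} (hf : ConvexOn ℝ Set.univ f) (c : E) (r : ℝ) :
    BddAbove (f '' closedBall c r) :=
  (isCompact_closedBall c r).bddAbove_image ((hf.continuousOn isOpen_univ).mono (Set.subset_univ _))

section InnerProductSpace

variable {E : Type*} [NormedAddCommGroup E] [InnerProductSpace ℝ E]

theorem exists_mem_closedBall_inner_eq_mul_norm (y : E) {r : ℝ} (hr : 0 ≤ r) :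
    ∃ x ∈ closedBall (0 : E) r, ⟪y, x⟫ = r * ‖y‖ := by
  rcases eq_or_ne y 0 with rfl | hy
  · exact ⟨0, mem_closedBall_self hr, by simp⟩
  have hy' : 0 < ‖y‖ := norm_pos_iff.mpr hy
  refine ⟨(r / ‖y‖) • y, ?_, ?_⟩
  · rw [mem_closedBall, dist_zero_right, norm_smul, Real.norm_of_nonneg (by positivity),
      div_mul_cancel₀ _ hy'.ne']
  · rw [real_inner_smul_right, real_inner_self_eq_norm_sq]
    field_simp

theorem mul_norm_sub_le_of_mem_upperBounds_inner_sub {f : E → ℝ} {r C : ℝ} (hr : 0 ≤ r)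
    (hC : C ∈ upperBounds (f '' closedBall 0 r)) {y : E} {s : ℝ}
    (hs : s ∈ upperBounds {t : ℝ | ∃ x, t = ⟪y, x⟫ - f x}) :
    r * ‖y‖ - C ≤ s := by
  obtain ⟨x, hx, hxy⟩ := exists_mem_closedBall_inner_eq_mul_norm y hr
  calc r * ‖y‖ - C ≤ ⟪y, x⟫ - f x := by rw [hxy]; linarith [hC (Set.mem_image_of_mem f hx)]
    _ ≤ s := hs ⟨x, rfl⟩

end InnerProductSpace

theorem tendsto_div_norm_cocompact_atTop_of_forall_mul_norm_sub_le {E : Type*}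
    [NormedAddCommGroup E] [ProperSpace E] {g : E → ℝ}
    (hg : ∀ r, 0 ≤ r → ∃ C, ∀ x, r * ‖x‖ - C ≤ g x) :
    Tendsto (fun x => g x / ‖x‖) (cocompact E) atTop := by
  refine tendsto_atTop.mpr fun b => ?_
  obtain ⟨C, hC⟩ := hg (max b 0 + 1) (by positivity)
  filter_upwards [tendsto_norm_cocompact_atTop.eventually_ge_atTop (max C 1)] with x hx
  have hx0 : 0 < ‖x‖ := one_pos.trans_le (le_of_max_le_right hx)
  have hCx : C / ‖x‖ ≤ 1 := (div_le_one hx0).mpr (le_of_max_le_left hx)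
  calc b ≤ max b 0 + 1 - C / ‖x‖ := by linarith [le_max_left b 0]
    _ = ((max b 0 + 1) * ‖x‖ - C) / ‖x‖ := by field_simp
    _ ≤ g x / ‖x‖ := by gcongr; exact hC x

/-- If `f : ℝⁿ → ℝ` is convex with full domain, then its convex conjugate
`f* : ℝⁿ → ℝ` (characterized as the least upper bound of `x* ↦ ⟨x*,x⟩ − f(x)`) is coercive:
`f*(x*)/‖x*‖ → ∞` as `‖x*‖ → ∞`. -/
theorem conjugate_coercive {n : ℕ}
    (f : EuclideanSpace ℝ (Fin n) → ℝ)
    (hconv : ConvexOn ℝ Set.univ f)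
    (fstar : EuclideanSpace ℝ (Fin n) → ℝ)
    (hfstar : ∀ xs, IsLUB {r : ℝ | ∃ x, r = ⟪xs, x⟫ - f x} (fstar xs)) :
    Filter.Tendsto (fun xs => fstar xs / ‖xs‖)
      (Filter.cocompact (EuclideanSpace ℝ (Fin n))) Filter.atTop := by
  refine tendsto_div_norm_cocompact_atTop_of_forall_mul_norm_sub_le fun r hr => ?_
  obtain ⟨C, hC⟩ := hconv.bddAbove_image_closedBall 0 r
  exact ⟨C, fun xs => mul_norm_sub_le_of_mem_upperBounds_inner_sub hr hC (hfstar xs).1⟩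
end

section
/- If f : ℝⁿ → ℝ is strongly convex with modulus α > 0, then its conjugate f* is differentiable with Lipschitz-continuous gradient: ‖∇f*(x*) − ∇f*(y*)‖₂ ≤ (1/α)‖x* − y*‖₂ for all x*, y* ∈ ℝⁿ. -/
open scoped RealInnerProductSpace

/-- Subgradient of `f` at `x`. -/
def IsSubgrad {E : Type*} [NormedAddCommGroup E] [InnerProductSpace ℝ E]
    (f : E → ℝ) (x xs : E) : Prop :=
  ∀ y, f x + ⟪xs, y - x⟫ ≤ f y

/-!
Being a finite convex function on `ℝⁿ`, `f*` is continuous, hence bounded near each `p`; this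
forces `x ↦ ⟪p, x⟫ - f x` to tend to `-∞` at infinity, so it attains its supremum `f* p` at some
`g p`. Then `p` is a subgradient of `f` at `g p` and `g p` is a subgradient of `f*` at `p`.
Adding the strong convexity inequalities at `g p` and `g q` gives
`α ‖g p - g q‖² ≤ ⟪p - q, g p - g q⟫`, whence `g` is `1/α`-Lipschitz. A function with a
continuous selection of subgradients is differentiable, with that selection as its gradient.
-/

open Filter Metric

variable {E : Type*} [NormedAddCommGroup E] [InnerProductSpace ℝ E]

def IsFenchelConjugate (f fstar : E → ℝ) : Prop :=
  ∀ xs, IsLUB {r : ℝ | ∃ x, r = ⟪xs, x⟫ - f x} (fstar xs)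

namespace IsFenchelConjugate

variable {f fstar : E → ℝ}

theorem inner_sub_le (h : IsFenchelConjugate f fstar) (p x : E) : ⟪p, x⟫ - f x ≤ fstar p :=
  (h p).1 ⟨x, rfl⟩

theorem convexOn (h : IsFenchelConjugate f fstar) : ConvexOn ℝ Set.univ fstar := by
  refine ⟨convex_univ, fun p _ q _ a b ha hb hab => (h _).2 ?_⟩
  rintro r ⟨x, rfl⟩
  have hp := mul_le_mul_of_nonneg_left (h.inner_sub_le p x) ha
  have hq := mul_le_mul_of_nonneg_left (h.inner_sub_le q x) hb
  rw [inner_add_left, real_inner_smul_left, real_inner_smul_left, smul_eq_mul, smul_eq_mul]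
  linear_combination hp + hq + f x * hab

theorem eq_of_forall_le (h : IsFenchelConjugate f fstar) {p m : E}
    (hm : ∀ y, ⟪p, y⟫ - f y ≤ ⟪p, m⟫ - f m) : fstar p = ⟪p, m⟫ - f m :=
  (h p).unique (IsGreatest.isLUB ⟨⟨m, rfl⟩, by rintro r ⟨x, rfl⟩; exact hm x⟩)

theorem isSubgrad_of_forall_le (h : IsFenchelConjugate f fstar) {p m : E}
    (hm : ∀ y, ⟪p, y⟫ - f y ≤ ⟪p, m⟫ - f m) : IsSubgrad fstar p m := by
  intro q
  have hq := h.inner_sub_le q m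
  rw [h.eq_of_forall_le hm, inner_sub_right]
  linarith [real_inner_comm m p, real_inner_comm m q]

/-- With `u = x / ‖x‖`, `⟪p, x⟫ - f x + ‖x‖ = ⟪p + u, x⟫ - f x ≤ f* (p + u)`. -/
theorem tendsto_inner_sub_cocompact_atBot [ProperSpace E] (h : IsFenchelConjugate f fstar)
    {p : E} (hbdd : BddAbove (fstar '' closedBall p 1)) :
    Tendsto (fun x => ⟪p, x⟫ - f x) (cocompact E) atBot := by
  obtain ⟨C, hC⟩ := hbdd
  have hcoercive : ∀ x, ⟪p, x⟫ - f x ≤ C - ‖x‖ := by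
    intro x
    set u : E := ‖x‖⁻¹ • x
    have hu : p + u ∈ closedBall p 1 := by
      rw [mem_closedBall, dist_eq_norm, add_sub_cancel_left, norm_smul, norm_inv, norm_norm]
      exact inv_mul_le_one_of_le₀ le_rfl (norm_nonneg x)
    have hinner : ⟪p + u, x⟫ = ⟪p, x⟫ + ‖x‖ := by
      rw [inner_add_left, real_inner_smul_left, real_inner_self_eq_norm_sq]
      rcases eq_or_ne ‖x‖ 0 with hx | hx
      · simp [hx]
      · field_simp
    have := h.inner_sub_le (p + u) x
    linarith [hC ⟨p + u, hu, rfl⟩]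
  exact tendsto_atBot_mono hcoercive
    (tendsto_atBot_add_const_left _ C (tendsto_neg_atTop_atBot.comp tendsto_norm_cocompact_atTop))

end IsFenchelConjugate

theorem norm_sub_le_of_strong_subgrad {f : E → ℝ} {α : ℝ} (hα : 0 < α) {x y p q : E}
    (hx : ∀ z, f x + ⟪p, z - x⟫ + α / 2 * ‖z - x‖ ^ 2 ≤ f z)
    (hy : ∀ z, f y + ⟪q, z - y⟫ + α / 2 * ‖z - y‖ ^ 2 ≤ f z) :
    ‖x - y‖ ≤ 1 / α * ‖p - q‖ := by
  have hmono : α * ‖x - y‖ ^ 2 ≤ ⟪p - q, x - y⟫ := by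
    have hxy := hx y
    have hyx := hy x
    rw [norm_sub_rev y x] at hxy
    rw [inner_sub_left, inner_sub_right, inner_sub_right] at *
    linarith
  have hcs : α * ‖x - y‖ * ‖x - y‖ ≤ ‖p - q‖ * ‖x - y‖ := by
    nlinarith [real_inner_le_norm (p - q) (x - y)]
  rcases (norm_nonneg (x - y)).eq_or_lt with h0 | hpos
  · rw [← h0]; positivity
  · rw [one_div_mul_eq_div, le_div_iff₀ hα, mul_comm]
    exact le_of_mul_le_mul_right hcs hpos

/-- The two subgradient inequalities at `x` and `y` squeeze the first-order remainder between `0`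
and `⟪g y - g x, y - x⟫`, which is `o(‖y - x‖)` by continuity of `g`. -/
theorem hasGradientAt_of_isSubgrad [CompleteSpace E] {φ : E → ℝ} {g : E → E}
    (hg : ∀ x, IsSubgrad φ x (g x)) {x : E} (hcont : ContinuousAt g x) :
    HasGradientAt φ (g x) x := by
  have hbound : ∀ y, ‖φ y - φ x - ⟪g x, y - x⟫‖ ≤ ‖g y - g x‖ * ‖y - x‖ := by
    intro y
    have hxy := hg x y
    have hyx := hg y x
    rw [← neg_sub y x, inner_neg_right] at hyx
    have hcs := real_inner_le_norm (g y - g x) (y - x)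
    rw [inner_sub_left] at hcs
    have := mul_nonneg (norm_nonneg (g y - g x)) (norm_nonneg (y - x))
    rw [Real.norm_eq_abs, abs_le]
    constructor <;> linarith
  rw [hasGradientAt_iff_isLittleO, Asymptotics.isLittleO_iff]
  intro c hc
  filter_upwards [tendsto_nhds.1 hcont c hc] with y hy
  rw [dist_eq_norm] at hy
  exact (hbound y).trans (mul_le_mul_of_nonneg_right hy.le (norm_nonneg _))

theorem conjugate_gradient_lipschitz_general {n : ℕ} (f : EuclideanSpace ℝ (Fin n) → ℝ)
    (hf : Continuous f)
    (α : ℝ) (hα : 0 < α)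
    (hstrong : ∀ x xs, IsSubgrad f x xs →
      ∀ y, f x + ⟪xs, y - x⟫ + α / 2 * ‖y - x‖ ^ 2 ≤ f y)
    (fstar : EuclideanSpace ℝ (Fin n) → ℝ)
    (hfstar : ∀ xs, IsLUB {r : ℝ | ∃ x, r = ⟪xs, x⟫ - f x} (fstar xs)) :
    ∃ g : EuclideanSpace ℝ (Fin n) → EuclideanSpace ℝ (Fin n),
      (∀ xs, HasGradientAt fstar (g xs) xs) ∧
      (∀ xs ys, ‖g xs - g ys‖ ≤ (1 / α) * ‖xs - ys‖) := by
  have hconj : IsFenchelConjugate f fstar := hfstar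
  have hcont : Continuous fstar :=
    continuousOn_univ.1 (hconj.convexOn.continuousOn isOpen_univ)
  have hmax : ∀ p, ∃ m, ∀ y, ⟪p, y⟫ - f y ≤ ⟪p, m⟫ - f m := fun p =>
    ((continuous_const.inner continuous_id).sub hf).exists_forall_ge
      (hconj.tendsto_inner_sub_cocompact_atBot
        ((isCompact_closedBall p 1).bddAbove_image hcont.continuousOn))
  choose g hg using hmax
  have hsubgrad : ∀ p, IsSubgrad f (g p) p := fun p y => by
    have := hg p y
    rw [inner_sub_right]
    linarith
  have hlip : ∀ p q, ‖g p - g q‖ ≤ 1 / α * ‖p - q‖ := fun p q =>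
    norm_sub_le_of_strong_subgrad hα (hstrong _ _ (hsubgrad p)) (hstrong _ _ (hsubgrad q))
  have hg_cont : Continuous g := (LipschitzWith.of_dist_le' (by simpa [dist_eq_norm])).continuous
  exact ⟨g, fun p => hasGradientAt_of_isSubgrad (fun q => hconj.isSubgrad_of_forall_le (hg q))
    hg_cont.continuousAt, hlip⟩

/-- If `f` is strongly convex with modulus `α > 0`, then its Fenchel conjugate
`f*` is differentiable with `(1/α)`-Lipschitz gradient. -/
theorem conjugate_gradient_lipschitz {n : ℕ} (f : EuclideanSpace ℝ (Fin n) → ℝ)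
    (hf : Continuous f) (hconv : ConvexOn ℝ Set.univ f)
    (α : ℝ) (hα : 0 < α)
    (hstrong : ∀ x xs, IsSubgrad f x xs →
      ∀ y, f x + ⟪xs, y - x⟫ + α / 2 * ‖y - x‖ ^ 2 ≤ f y)
    (fstar : EuclideanSpace ℝ (Fin n) → ℝ)
    (hfstar : ∀ xs, IsLUB {r : ℝ | ∃ x, r = ⟪xs, x⟫ - f x} (fstar xs)) :
    ∃ g : EuclideanSpace ℝ (Fin n) → EuclideanSpace ℝ (Fin n),
      (∀ xs, HasGradientAt fstar (g xs) xs) ∧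
      (∀ xs ys, ‖g xs - g ys‖ ≤ (1 / α) * ‖xs - ys‖) :=
  conjugate_gradient_lipschitz_general f hf α hα hstrong fstar hfstar
end

section
/- Let C ⊂ ℝⁿ be nonempty closed convex, f continuous and strongly convex, x ∈ ℝⁿ, x* ∈ ∂f(x). A point z ∈ C is the Bregman projection of x onto C with respect to f and x* (i.e., z minimizes y ↦ D^{x*}(x,y) over C) if and only if there exists z* ∈ ∂f(z) with ⟨z* − x*, y − z⟩ ≥ 0 for all y ∈ C. -/
/-!
Minimising `D^{x*}(x, ·)` over `C` is minimising the convex continuous function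
`h = f - ⟪x*, ·⟫` over `C`, and `∂h(z) = ∂f(z) - x*`. The sufficiency of the variational
inequality is immediate from the subgradient inequality. For necessity, separate the open convex
strict epigraph of `h` from the convex set `C × {h z}`, which it misses because `z` minimises `h`
on `C`. Testing the separating functional at `(z, h z + 1)` shows its vertical component is
negative, so after normalisation its horizontal component is a subgradient of `h` at `z` that is
nonnegative on `C - z`.
-/

open Set
open scoped RealInnerProductSpace

/-- Bregman distance `D^{x*}(x,y) = f(y) − f(x) − ⟨x*, y − x⟩`. -/
def Breg {E : Type*} [NormedAddCommGroup E] [InnerProductSpace ℝ E]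
    (f : E → ℝ) (xs x y : E) : ℝ :=
  f y - f x - ⟪xs, y - x⟫

section Separation

variable {E : Type*} [NormedAddCommGroup E] [NormedSpace ℝ E] {f : E → ℝ} {C : Set E} {z : E}

theorem ConvexOn.exists_separation_of_isMinOn (hconv : ConvexOn ℝ univ f) (hf : Continuous f)
    (hC : Convex ℝ C) (hz : z ∈ C) (hmin : IsMinOn f C z) :
    ∃ (ℓ : StrongDual ℝ E) (a u : ℝ), a < 0 ∧ (∀ w, ℓ w + f w * a ≤ u) ∧
      ∀ y ∈ C, u ≤ ℓ y + f z * a := by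
  have hopen : IsOpen {p : E × ℝ | p.1 ∈ univ ∧ f p.1 < p.2} := by
    simpa using isOpen_lt (hf.comp continuous_fst) continuous_snd
  have hdisj : Disjoint {p : E × ℝ | p.1 ∈ univ ∧ f p.1 < p.2} (C ×ˢ {f z}) := by
    rw [Set.disjoint_left]
    rintro ⟨w, t⟩ ⟨-, hwt⟩ ⟨hw, rfl : t = f z⟩
    exact (hmin hw).not_gt hwt
  obtain ⟨L, u, hbelow, habove⟩ := geometric_hahn_banach_open hconv.convex_strict_epigraph hopen
    (hC.prod (convex_singleton (f z))) hdisj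
  set ℓ := L.comp (ContinuousLinearMap.inl ℝ E ℝ)
  set a := L (0, 1)
  have hL : ∀ w t, L (w, t) = ℓ w + t * a := fun w t => by
    rw [show ((w, t) : E × ℝ) = (w, 0) + t • (0, 1) by simp, map_add, map_smul, smul_eq_mul]
    rfl
  have below : ∀ w t, f w < t → ℓ w + t * a < u := fun w t hwt => by
    simpa [hL] using hbelow (w, t) ⟨trivial, hwt⟩
  have above : ∀ y ∈ C, u ≤ ℓ y + f z * a := fun y hy => by
    simpa [hL] using habove (y, f z) ⟨hy, rfl⟩
  have ha : a < 0 := by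
    have := below z (f z + 1) (lt_add_one _)
    have := above z hz
    linarith
  refine ⟨ℓ, a, u, ha, fun w => le_of_forall_pos_lt_add fun ε hε => ?_, above⟩
  have hδ : 0 < ε / -a := div_pos hε (neg_pos.2 ha)
  have := below w (f w + ε / -a) (lt_add_of_pos_right _ hδ)
  have : (f w + ε / -a) * a = f w * a - ε := by
    rw [add_mul, div_neg, neg_mul, div_mul_cancel₀ _ ha.ne]; ring
  linarith

theorem ConvexOn.exists_strongDual_of_isMinOn (hconv : ConvexOn ℝ univ f) (hf : Continuous f)
    (hC : Convex ℝ C) (hz : z ∈ C) (hmin : IsMinOn f C z) :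
    ∃ φ : StrongDual ℝ E, (∀ y, f z + φ (y - z) ≤ f y) ∧ ∀ y ∈ C, 0 ≤ φ (y - z) := by
  obtain ⟨ℓ, a, u, ha, hgraph, habove⟩ := hconv.exists_separation_of_isMinOn hf hC hz hmin
  have hna : 0 < -a := neg_pos.2 ha
  refine ⟨(-a)⁻¹ • ℓ, fun y => ?_, fun y hy => ?_⟩
  · have : ℓ y - ℓ z ≤ -a * (f y - f z) := by linarith [hgraph y, habove z hz]
    have : (-a)⁻¹ * (ℓ y - ℓ z) ≤ f y - f z := (inv_mul_le_iff₀ hna).2 this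
    change f z + (-a)⁻¹ * ℓ (y - z) ≤ f y
    rw [map_sub]
    linarith
  · have : 0 ≤ ℓ y - ℓ z := by linarith [hgraph z, habove y hy]
    simpa using mul_nonneg (inv_pos.2 hna).le this

end Separation

section InnerProduct

variable {E : Type*} [NormedAddCommGroup E] [InnerProductSpace ℝ E] {f : E → ℝ} {C : Set E}
  {z : E}

theorem IsSubgrad.isMinOn {g : E} (hg : IsSubgrad f z g) (hgC : ∀ y ∈ C, 0 ≤ ⟪g, y - z⟫) :
    IsMinOn f C z := fun y hy =>
  show f z ≤ f y by linarith [hg y, hgC y hy]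

theorem ConvexOn.exists_isSubgrad_of_isMinOn [CompleteSpace E] (hconv : ConvexOn ℝ univ f)
    (hf : Continuous f) (hC : Convex ℝ C) (hz : z ∈ C) (hmin : IsMinOn f C z) :
    ∃ g, IsSubgrad f z g ∧ ∀ y ∈ C, 0 ≤ ⟪g, y - z⟫ := by
  obtain ⟨φ, hφ, hφC⟩ := hconv.exists_strongDual_of_isMinOn hf hC hz hmin
  refine ⟨(InnerProductSpace.toDual ℝ E).symm φ, fun y => ?_, fun y hy => ?_⟩ <;>
    rw [InnerProductSpace.toDual_symm_apply]
  exacts [hφ y, hφC y hy]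

theorem isSubgrad_sub_inner_iff {xs g : E} :
    IsSubgrad (fun w => f w - ⟪xs, w⟫) z g ↔ IsSubgrad f z (xs + g) := by
  simp only [IsSubgrad, inner_add_left, inner_sub_right]
  exact forall_congr' fun y => ⟨fun h => by linarith, fun h => by linarith⟩

theorem breg_le_breg_iff {xs x y : E} :
    Breg f xs x z ≤ Breg f xs x y ↔ f z - ⟪xs, z⟫ ≤ f y - ⟪xs, y⟫ := by
  simp only [Breg, inner_sub_right]
  constructor <;> intro h <;> linarith

end InnerProduct

theorem bregman_projection_characterization_general {n : ℕ}
    (f : EuclideanSpace ℝ (Fin n) → ℝ)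
    (hf : Continuous f) (hconv : ConvexOn ℝ Set.univ f)
    (C : Set (EuclideanSpace ℝ (Fin n)))
    (hCconv : Convex ℝ C)
    (x xs : EuclideanSpace ℝ (Fin n))
    (z : EuclideanSpace ℝ (Fin n)) (hz : z ∈ C) :
    (∀ y ∈ C, Breg f xs x z ≤ Breg f xs x y) ↔
    (∃ zs, IsSubgrad f z zs ∧ ∀ y ∈ C, 0 ≤ ⟪zs - xs, y - z⟫) := by
  set h : EuclideanSpace ℝ (Fin n) → ℝ := fun w => f w - ⟪xs, w⟫
  have hh_conv : ConvexOn ℝ univ h := hconv.sub ((innerₗ _ xs).concaveOn convex_univ)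
  have hh_cont : Continuous h := hf.sub (continuous_const.inner continuous_id)
  simp only [breg_le_breg_iff]
  change IsMinOn h C z ↔ _
  constructor
  · intro hmin
    obtain ⟨g, hg, hgC⟩ := hh_conv.exists_isSubgrad_of_isMinOn hh_cont hCconv hz hmin
    exact ⟨xs + g, isSubgrad_sub_inner_iff.1 hg, by simpa using hgC⟩
  · rintro ⟨zs, hzs, hzsC⟩
    exact (isSubgrad_sub_inner_iff.2 (by simpa using hzs)).isMinOn hzsC

/-- `z ∈ C` is the Bregman projection of `x` onto a nonempty closed convex `C`
iff there is `z* ∈ ∂f(z)` with `⟨z* − x*, y − z⟩ ≥ 0` for all `y ∈ C`. -/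
theorem bregman_projection_characterization {n : ℕ}
    (f : EuclideanSpace ℝ (Fin n) → ℝ)
    (hf : Continuous f) (hconv : ConvexOn ℝ Set.univ f)
    (α : ℝ) (hα : 0 < α)
    (hstrong : ∀ x xs, IsSubgrad f x xs →
      ∀ y, f x + ⟪xs, y - x⟫ + α / 2 * ‖y - x‖ ^ 2 ≤ f y)
    (C : Set (EuclideanSpace ℝ (Fin n)))
    (hC : C.Nonempty) (hCclosed : IsClosed C) (hCconv : Convex ℝ C)
    (x xs : EuclideanSpace ℝ (Fin n)) (hxs : IsSubgrad f x xs)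
    (z : EuclideanSpace ℝ (Fin n)) (hz : z ∈ C) :
    (∀ y ∈ C, Breg f xs x z ≤ Breg f xs x y) ↔
    (∃ zs, IsSubgrad f z zs ∧ ∀ y ∈ C, 0 ≤ ⟪zs - xs, y - z⟫) :=
  bregman_projection_characterization_general f hf hconv C hCconv x xs z hz
end

section
/- With z = Π_C^{x*}(x) the Bregman projection of x onto a nonempty closed convex set C and z* ∈ ∂f(z) an admissible subgradient (satisfying ⟨z* − x*, y − z⟩ ≥ 0 on C), one has D^{z*}(z,y) ≤ D^{x*}(x,y) − D^{x*}(x,z) for all y ∈ C. -/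
open scoped RealInnerProductSpace

section ThreePoint

variable {E : Type*} [NormedAddCommGroup E] [InnerProductSpace ℝ E]

theorem breg_eq_breg_add_breg_add_inner (f : E → ℝ) (x xs z zs y : E) :
    Breg f xs x y = Breg f xs x z + Breg f zs z y + ⟪zs - xs, y - z⟫ := by
  simp only [Breg, inner_sub_left, inner_sub_right]
  ring

theorem breg_le_breg_sub_breg_of_inner_nonneg (f : E → ℝ) {x xs z zs y : E}
    (h : 0 ≤ ⟪zs - xs, y - z⟫) :
    Breg f zs z y ≤ Breg f xs x y - Breg f xs x z := by
  linarith [breg_eq_breg_add_breg_add_inner f x xs z zs y]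

end ThreePoint

theorem bregman_projection_three_point_general {n : ℕ}
    (f : EuclideanSpace ℝ (Fin n) → ℝ)
    (C : Set (EuclideanSpace ℝ (Fin n)))
    (x xs : EuclideanSpace ℝ (Fin n))
    (z zs : EuclideanSpace ℝ (Fin n))
    (hadm : ∀ y ∈ C, 0 ≤ ⟪zs - xs, y - z⟫) :
    ∀ y ∈ C, Breg f zs z y ≤ Breg f xs x y - Breg f xs x z :=
  fun y hy => breg_le_breg_sub_breg_of_inner_nonneg f (hadm y hy)

/-- For the Bregman projection `z` of `x` onto `C` with admissible subgradient
`z* ∈ ∂f(z)`, one has `D^{z*}(z,y) ≤ D^{x*}(x,y) − D^{x*}(x,z)` for all `y ∈ C`. -/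
theorem bregman_projection_three_point {n : ℕ}
    (f : EuclideanSpace ℝ (Fin n) → ℝ)
    (hf : Continuous f) (hconv : ConvexOn ℝ Set.univ f)
    (α : ℝ) (hα : 0 < α)
    (hstrong : ∀ x xs, IsSubgrad f x xs →
      ∀ y, f x + ⟪xs, y - x⟫ + α / 2 * ‖y - x‖ ^ 2 ≤ f y)
    (C : Set (EuclideanSpace ℝ (Fin n)))
    (hC : C.Nonempty) (hCclosed : IsClosed C) (hCconv : Convex ℝ C)
    (x xs : EuclideanSpace ℝ (Fin n)) (hxs : IsSubgrad f x xs)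
    (z zs : EuclideanSpace ℝ (Fin n)) (hz : z ∈ C)
    (hproj : ∀ y ∈ C, Breg f xs x z ≤ Breg f xs x y)
    (hzs : IsSubgrad f z zs)
    (hadm : ∀ y ∈ C, 0 ≤ ⟪zs - xs, y - z⟫) :
    ∀ y ∈ C, Breg f zs z y ≤ Breg f xs x y - Breg f xs x z :=
  bregman_projection_three_point_general f C x xs z zs hadm
end

section
/- Let A ∈ ℝ^{m×n} have full row rank, b ∈ ℝᵐ, L(A,b) = {x : Ax = b}, and let f be continuous and strongly convex. For x ∈ ℝⁿ and x* ∈ ∂f(x), the function g(w) = f*(x* − Aᵀw) + ⟨w, b⟩ attains its minimum at some ŵ ∈ ℝᵐ, and z := ∇f*(x* − Aᵀŵ) is the Bregman projection of x onto L(A,b), with z* := x* − Aᵀŵ ∈ ∂f(z) an admissible subgradient. -/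
open scoped RealInnerProductSpace

/-! Strong convexity at a single point gives `y ↦ f y - ⟪u, y⟫` quadratic growth, so the
supremum defining `f* u` is attained at some `z`. Then `v ↦ f* v - ⟪v, z⟫` is minimal at `u`,
which forces `∇f* u = z`, and `u` is a subgradient of `f` at `z`.

Continuity bounds `f` on a ball around a solution `x₀` of `A x₀ = b`, whence
`g w ≥ ‖x* - Aᵀw‖ - C`; since `Aᵀ` is injective this makes the dual function `g` coercive, so it
has a minimiser `ŵ`. Its first-order condition reads `A z = b` for `z = ∇f*(x* - Aᵀŵ)`, and
`z* - x* = -Aᵀŵ` is orthogonal to `ker A`, which is admissibility. An admissible subgradient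
minimises the Bregman distance by the subgradient inequality. -/

open Filter Topology

theorem breg_le_of_isSubgrad {E : Type*} [NormedAddCommGroup E] [InnerProductSpace ℝ E]
    {f : E → ℝ} {xs x z zs y : E} (hz : IsSubgrad f z zs) (hy : 0 ≤ ⟪zs - xs, y - z⟫) :
    Breg f xs x z ≤ Breg f xs x y := by
  have hzy := hz y
  have hsplit : ⟪xs, y - x⟫ = ⟪xs, y - z⟫ + ⟪xs, z - x⟫ := by
    rw [← inner_add_right, sub_add_sub_cancel]
  rw [inner_sub_left] at hy
  unfold Breg
  linarith

theorem tendsto_cocompact_atTop_of_sq_growth {X : Type*} [PseudoMetricSpace X] [ProperSpace X]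
    {h : X → ℝ} (x : X) {a c K : ℝ} (ha : 0 < a)
    (hh : ∀ y, c - K * dist y x + a * dist y x ^ 2 ≤ h y) :
    Tendsto h (cocompact X) atTop := by
  have hquad : Tendsto (fun r : ℝ => c + r * (a * r - K)) atTop atTop :=
    tendsto_atTop_add_const_left _ _ <| tendsto_id.atTop_mul_atTop₀ <|
      tendsto_atTop_add_const_right _ _ (tendsto_id.const_mul_atTop ha)
  refine tendsto_atTop_mono (fun y => ?_) (hquad.comp (tendsto_dist_right_cocompact_atTop x))
  have := hh y
  simp only [Function.comp_apply]
  linarith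

section Conjugate

variable {E : Type*} [NormedAddCommGroup E] [InnerProductSpace ℝ E] {f fstar : E → ℝ}

theorem exists_forall_sub_inner_le [FiniteDimensional ℝ E] (hf : Continuous f) {α : ℝ}
    (hα : 0 < α) {x xs : E} (hgrowth : ∀ y, f x + ⟪xs, y - x⟫ + α / 2 * ‖y - x‖ ^ 2 ≤ f y)
    (u : E) : ∃ z, ∀ y, f z - ⟪u, z⟫ ≤ f y - ⟪u, y⟫ := by
  refine Continuous.exists_forall_le (f := fun y => f y - ⟪u, y⟫) (by fun_prop)
    (tendsto_cocompact_atTop_of_sq_growth x (c := f x - ⟪u, x⟫) (K := ‖xs - u‖)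
      (half_pos hα) fun y => ?_)
  have hCS : -(‖xs - u‖ * ‖y - x‖) ≤ ⟪xs - u, y - x⟫ :=
    neg_le_of_abs_le (abs_real_inner_le_norm _ _)
  have hsplit : ⟪xs, y - x⟫ - ⟪u, y⟫ = ⟪xs - u, y - x⟫ - ⟪u, x⟫ := by
    rw [inner_sub_left, inner_sub_right u]; ring
  have := hgrowth y
  rw [dist_eq_norm]
  linarith

theorem conj_eq_of_forall_sub_inner_le {u z : E}
    (hfstar : IsLUB {r : ℝ | ∃ x, r = ⟪u, x⟫ - f x} (fstar u))
    (hz : ∀ y, f z - ⟪u, z⟫ ≤ f y - ⟪u, y⟫) : fstar u = ⟪u, z⟫ - f z :=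
  hfstar.unique (IsGreatest.isLUB ⟨⟨z, rfl⟩, by rintro _ ⟨y, rfl⟩; linarith [hz y]⟩)

theorem isSubgrad_of_conj_eq {u z : E}
    (hfstar : IsLUB {r : ℝ | ∃ x, r = ⟪u, x⟫ - f x} (fstar u))
    (hz : fstar u = ⟪u, z⟫ - f z) : IsSubgrad f z u := by
  intro y
  have := hfstar.1 ⟨y, rfl⟩
  rw [inner_sub_right]
  linarith

theorem eq_of_hasGradientAt_conj [CompleteSpace E] {u z g : E}
    (hfstar : ∀ v, IsLUB {r : ℝ | ∃ x, r = ⟪v, x⟫ - f x} (fstar v))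
    (hg : HasGradientAt fstar g u) (hz : fstar u = ⟪u, z⟫ - f z) : g = z := by
  -- Fenchel–Young at `z`
  have hmin : IsLocalMin (fun v => fstar v - ⟪z, v⟫) u :=
    Eventually.of_forall fun v => by
      have := (hfstar v).1 ⟨z, rfl⟩
      show fstar u - ⟪z, u⟫ ≤ fstar v - ⟪z, v⟫
      rw [real_inner_comm v z, real_inner_comm u z]
      linarith
  have hderiv := hg.hasFDerivAt.sub ((InnerProductSpace.toDual ℝ E) z).hasFDerivAt
  have := hmin.hasFDerivAt_eq_zero hderiv
  rw [sub_eq_zero] at this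
  exact (InnerProductSpace.toDual ℝ E).injective this

theorem isSubgrad_of_hasGradientAt_conj [FiniteDimensional ℝ E] (hf : Continuous f) {α : ℝ}
    (hα : 0 < α) {x xs : E} (hgrowth : ∀ y, f x + ⟪xs, y - x⟫ + α / 2 * ‖y - x‖ ^ 2 ≤ f y)
    (hfstar : ∀ v, IsLUB {r : ℝ | ∃ x, r = ⟪v, x⟫ - f x} (fstar v)) {u g : E}
    (hg : HasGradientAt fstar g u) : IsSubgrad f g u := by
  obtain ⟨z, hz⟩ := exists_forall_sub_inner_le hf hα hgrowth u
  have hconj := conj_eq_of_forall_sub_inner_le (hfstar u) hz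
  rw [eq_of_hasGradientAt_conj hfstar hg hconj]
  exact isSubgrad_of_conj_eq (hfstar u) hconj

theorem inner_add_norm_sub_le_conj {v x₀ : E} {M : ℝ}
    (hfstar : IsLUB {r : ℝ | ∃ x, r = ⟪v, x⟫ - f x} (fstar v))
    (hM : ∀ y ∈ Metric.closedBall x₀ 1, f y ≤ M) : ⟪v, x₀⟫ + ‖v‖ - M ≤ fstar v := by
  rcases eq_or_ne v 0 with rfl | hv
  · have := hfstar.1 ⟨x₀, rfl⟩
    have := hM x₀ (Metric.mem_closedBall_self zero_le_one)
    simp only [norm_zero]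
    linarith
  have hvn : ‖v‖ ≠ 0 := norm_ne_zero_iff.2 hv
  have hd : ‖x₀ + ‖v‖⁻¹ • v - x₀‖ ≤ 1 := by
    rw [add_sub_cancel_left, norm_smul, norm_inv, norm_norm, inv_mul_cancel₀ hvn]
  have hvd : ⟪v, ‖v‖⁻¹ • v⟫ = ‖v‖ := by
    rw [real_inner_smul_right, real_inner_self_eq_norm_sq]
    field_simp
  have := hfstar.1 ⟨x₀ + ‖v‖⁻¹ • v, rfl⟩
  have := hM _ (by rwa [Metric.mem_closedBall, dist_eq_norm])
  rw [inner_add_right, hvd] at *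
  linarith

end Conjugate

section Dual

variable {E F : Type*} [NormedAddCommGroup E] [InnerProductSpace ℝ E]
  [NormedAddCommGroup F] [InnerProductSpace ℝ F] {f fstar : E → ℝ}

open ContinuousLinearMap

theorem ContinuousLinearMap.injective_adjoint_of_surjective [CompleteSpace E] [CompleteSpace F]
    {A : E →L[ℝ] F} (hA : Function.Surjective A) : Function.Injective (adjoint A) := by
  rw [← coe_coe, ← LinearMap.ker_eq_bot, ← A.orthogonal_range, LinearMap.range_eq_top.2 hA,
    Submodule.top_orthogonal_eq_bot]

theorem exists_forall_conj_sub_adjoint_add_inner_le [FiniteDimensional ℝ E]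
    [FiniteDimensional ℝ F] (hf : Continuous f)
    (hfstar : ∀ v, IsLUB {r : ℝ | ∃ x, r = ⟪v, x⟫ - f x} (fstar v)) (hcont : Continuous fstar)
    {A : E →L[ℝ] F} (hA : Function.Surjective A) (b : F) (xs : E) :
    ∃ ŵ, ∀ w, fstar (xs - adjoint A ŵ) + ⟪ŵ, b⟫ ≤ fstar (xs - adjoint A w) + ⟪w, b⟫ := by
  obtain ⟨x₀, rfl⟩ := hA b
  obtain ⟨M, hM⟩ := (isCompact_closedBall x₀ 1).bddAbove_image hf.continuousOn
  have hlow : ∀ w,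
      ⟪xs, x₀⟫ - M + dist xs (adjoint A w) ≤ fstar (xs - adjoint A w) + ⟪w, A x₀⟫ := by
    intro w
    have := inner_add_norm_sub_le_conj (hfstar (xs - adjoint A w)) fun y hy => hM ⟨y, hy, rfl⟩
    rw [inner_sub_left, adjoint_inner_left] at this
    rw [dist_eq_norm]
    linarith
  have hT : Tendsto (adjoint A) (cocompact F) (cocompact E) :=
    (LinearMap.isClosedEmbedding_of_injective (f := (adjoint A : F →ₗ[ℝ] E))
      (LinearMap.ker_eq_bot.2 (injective_adjoint_of_surjective hA))).tendsto_cocompact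
  exact Continuous.exists_forall_le (by fun_prop) <| tendsto_atTop_mono hlow <|
    tendsto_atTop_add_const_left _ _ ((tendsto_dist_left_cocompact_atTop xs).comp hT)

theorem apply_eq_of_isMin_conj_sub_adjoint_add_inner [CompleteSpace E] [CompleteSpace F]
    {A : E →L[ℝ] F} {b : F} {xs z : E} {ŵ : F}
    (hmin : ∀ w, fstar (xs - adjoint A ŵ) + ⟪ŵ, b⟫ ≤ fstar (xs - adjoint A w) + ⟪w, b⟫)
    (hz : HasGradientAt fstar z (xs - adjoint A ŵ)) : A z = b := by
  have hlin : HasFDerivAt (fun w : F => ⟪w, b⟫) (InnerProductSpace.toDual ℝ F b) ŵ :=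
    (InnerProductSpace.toDual ℝ F b).hasFDerivAt.congr_of_eventuallyEq <|
      Eventually.of_forall fun w => by simp [real_inner_comm]
  have hderiv := (hz.hasFDerivAt.comp ŵ ((hasFDerivAt_const xs ŵ).sub
    (adjoint A).hasFDerivAt)).add hlin
  have hzero := IsLocalMin.hasFDerivAt_eq_zero (Eventually.of_forall hmin) hderiv
  refine ext_inner_right ℝ fun v => ?_
  have := congrArg (fun L => L v) hzero
  simp only [add_apply, comp_apply, zero_sub, neg_apply, zero_apply,
    InnerProductSpace.toDual_apply_apply, inner_neg_right, adjoint_inner_right] at this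
  linarith

end Dual

theorem bregman_projection_affine_general {n m : ℕ}
    (f : EuclideanSpace ℝ (Fin n) → ℝ)
    (hf : Continuous f)
    (α : ℝ) (hα : 0 < α)
    (hstrong : ∀ x xs, IsSubgrad f x xs →
      ∀ y, f x + ⟪xs, y - x⟫ + α / 2 * ‖y - x‖ ^ 2 ≤ f y)
    (fstar : EuclideanSpace ℝ (Fin n) → ℝ)
    (hfstar : ∀ xs, IsLUB {r : ℝ | ∃ x, r = ⟪xs, x⟫ - f x} (fstar xs))
    (gradfstar : EuclideanSpace ℝ (Fin n) → EuclideanSpace ℝ (Fin n))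
    (hgrad : ∀ xs, HasGradientAt fstar (gradfstar xs) xs)
    (A : EuclideanSpace ℝ (Fin n) →L[ℝ] EuclideanSpace ℝ (Fin m))
    (hA : Function.Surjective A)   -- full row rank
    (b : EuclideanSpace ℝ (Fin m))
    (x xs : EuclideanSpace ℝ (Fin n)) (hxs : IsSubgrad f x xs) :
    ∃ what : EuclideanSpace ℝ (Fin m),
      (∀ w, fstar (xs - ContinuousLinearMap.adjoint A what) + ⟪what, b⟫ ≤
            fstar (xs - ContinuousLinearMap.adjoint A w) + ⟪w, b⟫) ∧
      (let zs := xs - ContinuousLinearMap.adjoint A what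
       let z := gradfstar zs
       A z = b ∧ IsSubgrad f z zs ∧
       (∀ y, A y = b → Breg f xs x z ≤ Breg f xs x y) ∧
       (∀ y, A y = b → 0 ≤ ⟪zs - xs, y - z⟫)) := by
  have hcont : Continuous fstar := continuous_iff_continuousAt.2 fun v => (hgrad v).continuousAt
  obtain ⟨what, hmin⟩ := exists_forall_conj_sub_adjoint_add_inner_le hf hfstar hcont hA b xs
  refine ⟨what, hmin, ?_⟩
  intro zs z
  have hsub : IsSubgrad f z zs :=
    isSubgrad_of_hasGradientAt_conj hf hα (hstrong x xs hxs) hfstar (hgrad zs)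
  have hAz : A z = b := apply_eq_of_isMin_conj_sub_adjoint_add_inner hmin (hgrad zs)
  have hadm : ∀ y, A y = b → ⟪zs - xs, y - z⟫ = 0 := fun y hy => by
    rw [sub_sub_cancel_left, inner_neg_left, ContinuousLinearMap.adjoint_inner_left, map_sub, hy,
      hAz, sub_self, inner_zero_right, neg_zero]
  exact ⟨hAz, hsub, fun y hy => breg_le_of_isSubgrad hsub (hadm y hy).ge,
    fun y hy => (hadm y hy).ge⟩

/-- For `A` with full row rank and `b ∈ ℝᵐ`, the function
`g(w) = f*(x* − Aᵀw) + ⟨w, b⟩` attains its minimum at some `ŵ`, and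
`z := ∇f*(x* − Aᵀŵ)` is the Bregman projection of `x` onto `L(A,b) = {x : Ax = b}`
with admissible subgradient `z* := x* − Aᵀŵ ∈ ∂f(z)`. -/
theorem bregman_projection_affine {n m : ℕ}
    (f : EuclideanSpace ℝ (Fin n) → ℝ)
    (hf : Continuous f) (hconv : ConvexOn ℝ Set.univ f)
    (α : ℝ) (hα : 0 < α)
    (hstrong : ∀ x xs, IsSubgrad f x xs →
      ∀ y, f x + ⟪xs, y - x⟫ + α / 2 * ‖y - x‖ ^ 2 ≤ f y)
    (fstar : EuclideanSpace ℝ (Fin n) → ℝ)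
    (hfstar : ∀ xs, IsLUB {r : ℝ | ∃ x, r = ⟪xs, x⟫ - f x} (fstar xs))
    (gradfstar : EuclideanSpace ℝ (Fin n) → EuclideanSpace ℝ (Fin n))
    (hgrad : ∀ xs, HasGradientAt fstar (gradfstar xs) xs)
    (A : EuclideanSpace ℝ (Fin n) →L[ℝ] EuclideanSpace ℝ (Fin m))
    (hA : Function.Surjective A)   -- full row rank
    (b : EuclideanSpace ℝ (Fin m))
    (x xs : EuclideanSpace ℝ (Fin n)) (hxs : IsSubgrad f x xs) :
    ∃ what : EuclideanSpace ℝ (Fin m),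
      (∀ w, fstar (xs - ContinuousLinearMap.adjoint A what) + ⟪what, b⟫ ≤
            fstar (xs - ContinuousLinearMap.adjoint A w) + ⟪w, b⟫) ∧
      (let zs := xs - ContinuousLinearMap.adjoint A what
       let z := gradfstar zs
       A z = b ∧ IsSubgrad f z zs ∧
       (∀ y, A y = b → Breg f xs x z ≤ Breg f xs x y) ∧
       (∀ y, A y = b → 0 ≤ ⟪zs - xs, y - z⟫)) :=
  bregman_projection_affine_general f hf α hα hstrong fstar hfstar gradfstar hgrad A hA b x xs hxs
end

section
/- In the setting of the Bregman projection z onto the affine subspace L(A,b) with admissible subgradient z* = x* − Aᵀŵ, the estimate D^{z*}(z,y) ≤ D^{x*}(x,y) − (α/2)‖(AAᵀ)^{−1/2}(Ax − b)‖₂² holds for all y ∈ L(A,b). -/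
open scoped RealInnerProductSpace

/-!
By Fenchel–Young, `D^{z*}(z,y) ≤ f y - ⟪z*, y⟫ + f*(z*)`, and for `y ∈ L(A,b)`
the term `⟪z*, y⟫` equals `⟪x*, y⟫ - ⟪ŵ, b⟫`; so it suffices to bound the dual objective
`w ↦ f*(x* - Aᵀw) + ⟪w, b⟫` at its minimiser `ŵ`. Strong convexity of `f` makes `f*`
`1/α`-smooth around `x*`, and evaluating the resulting quadratic upper bound at
`w = α (AAᵀ)⁻¹(Ax - b)` gives `⟪x*, x⟫ - f x - (α/2)⟪(AAᵀ)⁻¹(Ax - b), Ax - b⟫`.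
-/

section

variable {E F : Type*} [NormedAddCommGroup E] [InnerProductSpace ℝ E]
  [NormedAddCommGroup F] [InnerProductSpace ℝ F]

lemma real_inner_le_norm_sq_div_add {α : ℝ} (hα : 0 < α) (u v : E) :
    ⟪u, v⟫ ≤ ‖u‖ ^ 2 / (2 * α) + α / 2 * ‖v‖ ^ 2 := by
  have hsq : 0 ≤ ‖u - α • v‖ ^ 2 / (2 * α) := by positivity
  rw [norm_sub_sq_real, real_inner_smul_right, norm_smul, Real.norm_of_nonneg hα.le] at hsq
  have hα' : α ≠ 0 := hα.ne'
  have expand : (‖u‖ ^ 2 - 2 * (α * ⟪u, v⟫) + (α * ‖v‖) ^ 2) / (2 * α)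
      = ‖u‖ ^ 2 / (2 * α) + α / 2 * ‖v‖ ^ 2 - ⟪u, v⟫ := by
    field_simp
    ring
  linarith

lemma le_inner_sub_add_norm_sq_of_isLUB_conj {f : E → ℝ} {α : ℝ} (hα : 0 < α) {x xs : E}
    (hstrong : ∀ y, f x + ⟪xs, y - x⟫ + α / 2 * ‖y - x‖ ^ 2 ≤ f y)
    {p : E} {c : ℝ} (hc : IsLUB {r : ℝ | ∃ y, r = ⟪p, y⟫ - f y} c) :
    c ≤ ⟪p, x⟫ - f x + ‖p - xs‖ ^ 2 / (2 * α) := by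
  refine hc.2 ?_
  rintro r ⟨y, rfl⟩
  have hyoung := real_inner_le_norm_sq_div_add hα (p - xs) (y - x)
  have hsplit : ⟪p, y⟫ = ⟪p - xs, y - x⟫ + ⟪xs, y - x⟫ + ⟪p, x⟫ := by
    simp only [inner_sub_left, inner_sub_right]
    ring
  linarith [hstrong y]

variable [CompleteSpace E] [CompleteSpace F]

lemma norm_adjoint_apply_sq (A : E →L[ℝ] F) (v : F) :
    ‖ContinuousLinearMap.adjoint A v‖ ^ 2 = ⟪v, A (ContinuousLinearMap.adjoint A v)⟫ := by
  rw [← real_inner_self_eq_norm_sq, ContinuousLinearMap.adjoint_inner_left]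

lemma conj_sub_adjoint_smul_add_inner_le {f fstar : E → ℝ}
    (hfstar : ∀ p, IsLUB {r : ℝ | ∃ y, r = ⟪p, y⟫ - f y} (fstar p))
    {α : ℝ} (hα : 0 < α) {x xs : E}
    (hstrong : ∀ y, f x + ⟪xs, y - x⟫ + α / 2 * ‖y - x‖ ^ 2 ≤ f y)
    (A : E →L[ℝ] F) (b v : F) (hv : A (ContinuousLinearMap.adjoint A v) = A x - b) :
    fstar (xs - ContinuousLinearMap.adjoint A (α • v)) + ⟪α • v, b⟫
      ≤ ⟪xs, x⟫ - f x - α / 2 * ⟪v, A x - b⟫ := by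
  set p := xs - ContinuousLinearMap.adjoint A (α • v)
  have hbound := le_inner_sub_add_norm_sq_of_isLUB_conj hα hstrong (hfstar p)
  have hnorm : ‖p - xs‖ ^ 2 / (2 * α) = α / 2 * ⟪v, A x - b⟫ := by
    rw [sub_sub_cancel_left, norm_neg, map_smul, norm_smul, mul_pow, norm_adjoint_apply_sq, hv,
      Real.norm_of_nonneg hα.le]
    field_simp
  have hpx : ⟪p, x⟫ = ⟪xs, x⟫ - α * ⟪v, A x⟫ := by
    rw [inner_sub_left, ContinuousLinearMap.adjoint_inner_left, real_inner_smul_left]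
  rw [hnorm, hpx, inner_sub_right] at hbound
  rw [real_inner_smul_left, inner_sub_right]
  linarith

end

theorem bregman_projection_affine_decrease_general {n m : ℕ}
    (f : EuclideanSpace ℝ (Fin n) → ℝ)
    (α : ℝ) (hα : 0 < α)
    (hstrong : ∀ x xs, IsSubgrad f x xs →
      ∀ y, f x + ⟪xs, y - x⟫ + α / 2 * ‖y - x‖ ^ 2 ≤ f y)
    (fstar : EuclideanSpace ℝ (Fin n) → ℝ)
    (hfstar : ∀ xs, IsLUB {r : ℝ | ∃ x, r = ⟪xs, x⟫ - f x} (fstar xs))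
    (A : EuclideanSpace ℝ (Fin n) →L[ℝ] EuclideanSpace ℝ (Fin m))
    (Binv : EuclideanSpace ℝ (Fin m) →L[ℝ] EuclideanSpace ℝ (Fin m))
    (hBinv₁ : ∀ u, A (ContinuousLinearMap.adjoint A (Binv u)) = u)
    (b : EuclideanSpace ℝ (Fin m))
    (x xs : EuclideanSpace ℝ (Fin n)) (hxs : IsSubgrad f x xs)
    (what : EuclideanSpace ℝ (Fin m))
    (hwhat : ∀ w, fstar (xs - ContinuousLinearMap.adjoint A what) + ⟪what, b⟫ ≤
                  fstar (xs - ContinuousLinearMap.adjoint A w) + ⟪w, b⟫)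
    (zs z : EuclideanSpace ℝ (Fin n))
    (hzs : zs = xs - ContinuousLinearMap.adjoint A what) :
    ∀ y, A y = b →
      Breg f zs z y ≤ Breg f xs x y - α / 2 * ⟪Binv (A x - b), A x - b⟫ := by
  intro y hy
  have hfenchelYoung : ⟪zs, z⟫ - f z ≤ fstar zs := (hfstar zs).1 ⟨z, rfl⟩
  have hzsy : ⟪zs, y⟫ = ⟪xs, y⟫ - ⟪what, b⟫ := by
    rw [hzs, inner_sub_left, ContinuousLinearMap.adjoint_inner_left, hy]
  have hdual : fstar zs + ⟪what, b⟫ ≤ ⟪xs, x⟫ - f x - α / 2 * ⟪Binv (A x - b), A x - b⟫ :=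
    hzs ▸ (hwhat _).trans (conj_sub_adjoint_smul_add_inner_le hfstar hα (hstrong x xs hxs) A b
      (Binv (A x - b)) (hBinv₁ _))
  simp only [Breg, inner_sub_right] at hdual ⊢
  linarith

/-- For the Bregman projection `z = ∇f*(x* − Aᵀŵ)` of `x` onto `L(A,b)`
with admissible subgradient `z* = x* − Aᵀŵ`, one has for all `y ∈ L(A,b)`
`D^{z*}(z,y) ≤ D^{x*}(x,y) − (α/2)‖(AAᵀ)^{−1/2}(Ax − b)‖²`, where
`‖(AAᵀ)^{−1/2}u‖² = ⟨(AAᵀ)⁻¹u, u⟩` and `(AAᵀ)⁻¹` is the inverse `Binv` of `A Aᵀ`. -/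
theorem bregman_projection_affine_decrease {n m : ℕ}
    (f : EuclideanSpace ℝ (Fin n) → ℝ)
    (hf : Continuous f) (hconv : ConvexOn ℝ Set.univ f)
    (α : ℝ) (hα : 0 < α)
    (hstrong : ∀ x xs, IsSubgrad f x xs →
      ∀ y, f x + ⟪xs, y - x⟫ + α / 2 * ‖y - x‖ ^ 2 ≤ f y)
    (fstar : EuclideanSpace ℝ (Fin n) → ℝ)
    (hfstar : ∀ xs, IsLUB {r : ℝ | ∃ x, r = ⟪xs, x⟫ - f x} (fstar xs))
    (gradfstar : EuclideanSpace ℝ (Fin n) → EuclideanSpace ℝ (Fin n))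
    (hgrad : ∀ xs, HasGradientAt fstar (gradfstar xs) xs)
    (A : EuclideanSpace ℝ (Fin n) →L[ℝ] EuclideanSpace ℝ (Fin m))
    (hA : Function.Surjective A)   -- full row rank
    (Binv : EuclideanSpace ℝ (Fin m) →L[ℝ] EuclideanSpace ℝ (Fin m))
    (hBinv₁ : ∀ u, A (ContinuousLinearMap.adjoint A (Binv u)) = u)
    (hBinv₂ : ∀ u, Binv (A (ContinuousLinearMap.adjoint A u)) = u)
    (b : EuclideanSpace ℝ (Fin m))
    (x xs : EuclideanSpace ℝ (Fin n)) (hxs : IsSubgrad f x xs)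
    (what : EuclideanSpace ℝ (Fin m))
    (hwhat : ∀ w, fstar (xs - ContinuousLinearMap.adjoint A what) + ⟪what, b⟫ ≤
                  fstar (xs - ContinuousLinearMap.adjoint A w) + ⟪w, b⟫)
    (zs z : EuclideanSpace ℝ (Fin n))
    (hzs : zs = xs - ContinuousLinearMap.adjoint A what)
    (hz : z = gradfstar zs) :
    ∀ y, A y = b →
      Breg f zs z y ≤ Breg f xs x y - α / 2 * ⟪Binv (A x - b), A x - b⟫ :=
  bregman_projection_affine_decrease_general f α hα hstrong fstar hfstar A Binv hBinv₁ b x xs hxs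
    what hwhat zs z hzs
end

section
/- Let 0 ≠ a ∈ ℝⁿ, β ∈ ℝ, and let z be the Bregman projection of x onto the hyperplane H(a,β) = {y : ⟨a,y⟩ = β} with admissible subgradient z* = x* − t̂·a, where t̂ minimizes t ↦ f*(x* − t·a) + tβ. Then for all y ∈ H(a,β): D^{z*}(z,y) ≤ D^{x*}(x,y) − (α/2)(⟨a,x⟩ − β)²/‖a‖₂². -/
open scoped RealInnerProductSpace

/-!
The optimality condition for `t̂` says `⟨a, ∇f*(z*)⟩ = β`, i.e. `z ∈ H(a,β)`; since `z* − x*` is a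
multiple of `a`, it is orthogonal to `y − z` for every `y ∈ H(a,β)`. The three-point identity then
gives `D^{z*}(z,y) = D^{x*}(x,y) − D^{x*}(x,z)`, and strong convexity with Cauchy–Schwarz bounds
`D^{x*}(x,z) ≥ (α/2)‖z − x‖² ≥ (α/2)⟨a, z − x⟩²/‖a‖² = (α/2)(⟨a,x⟩ − β)²/‖a‖²`.
-/

section

variable {E : Type*} [NormedAddCommGroup E] [InnerProductSpace ℝ E]

theorem breg_three_point (f : E → ℝ) (xs zs x y z : E) :
    Breg f xs x y = Breg f xs x z + Breg f zs z y + ⟪zs - xs, y - z⟫ := by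
  simp only [Breg, inner_sub_left, inner_sub_right]
  ring

theorem sq_inner_div_norm_sq_le (a v : E) : ⟪a, v⟫ ^ 2 / ‖a‖ ^ 2 ≤ ‖v‖ ^ 2 :=
  div_le_of_le_mul₀ (sq_nonneg _) (sq_nonneg _) <| by
    rw [← mul_pow, mul_comm]
    exact sq_le_sq' (neg_le_of_abs_le (abs_real_inner_le_norm a v)) (real_inner_le_norm a v)

theorem inner_gradient_eq_of_minimizer [CompleteSpace E] {φ : E → ℝ} {g xs a : E} {β t₀ : ℝ}
    (hmin : ∀ t : ℝ, φ (xs - t₀ • a) + t₀ * β ≤ φ (xs - t • a) + t * β)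
    (hg : HasGradientAt φ g (xs - t₀ • a)) : ⟪a, g⟫ = β := by
  have hline : HasDerivAt (fun t : ℝ => xs - t • a) (-a) t₀ := by
    simpa using ((hasDerivAt_id t₀).smul_const a).const_sub xs
  have hderiv : HasDerivAt (fun t : ℝ => φ (xs - t • a) + t * β) (-⟪g, a⟫ + β) t₀ := by
    have hcomp : HasDerivAt (fun t : ℝ => φ (xs - t • a)) ⟪g, -a⟫ t₀ :=
      (hg.hasFDerivAt.comp_hasDerivAt t₀ hline :)
    rw [inner_neg_right] at hcomp
    exact hcomp.add (hasDerivAt_mul_const β)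
  have hloc : IsLocalMin (fun t : ℝ => φ (xs - t • a) + t * β) t₀ :=
    Filter.Eventually.of_forall hmin
  have hcrit := hloc.hasDerivAt_eq_zero hderiv
  rw [real_inner_comm] at hcrit
  linarith

end

theorem bregman_projection_hyperplane_decrease_general {n : ℕ}
    (f : EuclideanSpace ℝ (Fin n) → ℝ)
    (α : ℝ) (hα : 0 < α)
    (hstrong : ∀ x xs, IsSubgrad f x xs →
      ∀ y, f x + ⟪xs, y - x⟫ + α / 2 * ‖y - x‖ ^ 2 ≤ f y)
    (fstar : EuclideanSpace ℝ (Fin n) → ℝ)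
    (gradfstar : EuclideanSpace ℝ (Fin n) → EuclideanSpace ℝ (Fin n))
    (hgrad : ∀ xs, HasGradientAt fstar (gradfstar xs) xs)
    (a : EuclideanSpace ℝ (Fin n)) (β : ℝ)
    (x xs : EuclideanSpace ℝ (Fin n)) (hxs : IsSubgrad f x xs)
    (that : ℝ)
    (hthat : ∀ t : ℝ, fstar (xs - that • a) + that * β ≤ fstar (xs - t • a) + t * β)
    (zs z : EuclideanSpace ℝ (Fin n))
    (hzs : zs = xs - that • a)
    (hz : z = gradfstar zs) :
    ∀ y, ⟪a, y⟫ = β →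
      Breg f zs z y ≤ Breg f xs x y - α / 2 * (⟪a, x⟫ - β) ^ 2 / ‖a‖ ^ 2 := by
  intro y hy
  have haz : ⟪a, z⟫ = β := by
    subst hz hzs
    exact inner_gradient_eq_of_minimizer hthat (hgrad _)
  have horth : ⟪zs - xs, y - z⟫ = 0 := by
    rw [hzs, sub_sub_cancel_left, inner_neg_left, real_inner_smul_left, inner_sub_right, hy, haz]
    ring
  have hstep : α / 2 * ‖z - x‖ ^ 2 ≤ Breg f xs x z := by
    have := hstrong x xs hxs z
    unfold Breg
    linarith
  have hcs : (⟪a, x⟫ - β) ^ 2 / ‖a‖ ^ 2 ≤ ‖z - x‖ ^ 2 := by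
    have : (⟪a, x⟫ - β) ^ 2 = ⟪a, z - x⟫ ^ 2 := by rw [inner_sub_right, haz]; ring
    exact this ▸ sq_inner_div_norm_sq_le a (z - x)
  have hscaled := mul_le_mul_of_nonneg_left hcs (by positivity : 0 ≤ α / 2)
  rw [breg_three_point f xs zs x y z, horth, mul_div_assoc]
  linarith

/-- For the Bregman projection `z = ∇f*(x* − t̂·a)` of `x` onto the
hyperplane `H(a,β)`, with `t̂` minimizing `t ↦ f*(x* − t·a) + tβ` and admissible
subgradient `z* = x* − t̂·a`, one has for all `y ∈ H(a,β)`
`D^{z*}(z,y) ≤ D^{x*}(x,y) − (α/2)(⟨a,x⟩ − β)²/‖a‖²`. -/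
theorem bregman_projection_hyperplane_decrease {n : ℕ}
    (f : EuclideanSpace ℝ (Fin n) → ℝ)
    (hf : Continuous f) (hconv : ConvexOn ℝ Set.univ f)
    (α : ℝ) (hα : 0 < α)
    (hstrong : ∀ x xs, IsSubgrad f x xs →
      ∀ y, f x + ⟪xs, y - x⟫ + α / 2 * ‖y - x‖ ^ 2 ≤ f y)
    (fstar : EuclideanSpace ℝ (Fin n) → ℝ)
    (hfstar : ∀ xs, IsLUB {r : ℝ | ∃ x, r = ⟪xs, x⟫ - f x} (fstar xs))
    (gradfstar : EuclideanSpace ℝ (Fin n) → EuclideanSpace ℝ (Fin n))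
    (hgrad : ∀ xs, HasGradientAt fstar (gradfstar xs) xs)
    (a : EuclideanSpace ℝ (Fin n)) (ha : a ≠ 0) (β : ℝ)
    (x xs : EuclideanSpace ℝ (Fin n)) (hxs : IsSubgrad f x xs)
    (that : ℝ)
    (hthat : ∀ t : ℝ, fstar (xs - that • a) + that * β ≤ fstar (xs - t • a) + t * β)
    (zs z : EuclideanSpace ℝ (Fin n))
    (hzs : zs = xs - that • a)
    (hz : z = gradfstar zs) :
    ∀ y, ⟪a, y⟫ = β →
      Breg f zs z y ≤ Breg f xs x y - α / 2 * (⟪a, x⟫ - β) ^ 2 / ‖a‖ ^ 2 :=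
  bregman_projection_hyperplane_decrease_general f α hα hstrong fstar gradfstar hgrad a β x xs hxs
    that hthat zs z hzs hz
end

section
/- Let z be the Bregman projection of x onto the hyperplane H(a,β), obtained via a minimizer t̂ of g(t) = f*(x* − t·a) + tβ. If x ∉ H_≤(a,β) = {y : ⟨a,y⟩ ≤ β}, then t̂ > 0 and z is also the Bregman projection of x onto the half-space H_≤(a,β). -/
/-!
Strong convexity makes `y ↦ f y - ⟪w, y⟫` coercive, so every `w` is a subgradient of `f` at some
point `u`; then `u` is a subgradient of `f*` at `w`, and differentiability of `f*` forces
`∇f*(w) = u`. Hence `x* - t̂ • a` is a subgradient of `f` at `z`, and the first-order condition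
`g'(t̂) = β - ⟪a, z⟫ = 0` puts `z` on the hyperplane. Strong monotonicity of `∂f` gives
`t̂ (⟪a, x⟫ - β) = ⟪t̂ • a, x - z⟫ ≥ α ‖x - z‖² > 0`, so `t̂ > 0`; the subgradient inequality at `z`
is then the KKT condition for minimizing `D^{x*}(x, ·)` over the half-space.
-/

open scoped RealInnerProductSpace

open Filter

variable {E : Type*} [NormedAddCommGroup E] [InnerProductSpace ℝ E]

namespace IsSubgrad

variable {f : E → ℝ} {u w : E}

theorem isGreatest_inner_sub (h : IsSubgrad f u w) :
    IsGreatest {r : ℝ | ∃ y, r = ⟪w, y⟫ - f y} (⟪w, u⟫ - f u) := by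
  refine ⟨⟨u, rfl⟩, ?_⟩
  rintro r ⟨y, rfl⟩
  have := h y
  rw [inner_sub_right] at this
  linarith

theorem isSubgrad_conj {fstar : E → ℝ}
    (hfstar : ∀ w, IsLUB {r : ℝ | ∃ y, r = ⟪w, y⟫ - f y} (fstar w)) (h : IsSubgrad f u w) :
    IsSubgrad fstar w u := by
  intro v
  have hw : fstar w = ⟪w, u⟫ - f u := (hfstar w).unique h.isGreatest_inner_sub.isLUB
  have hv : ⟪v, u⟫ - f u ≤ fstar v := (hfstar v).1 ⟨u, rfl⟩
  rw [hw, inner_sub_right, real_inner_comm v u, real_inner_comm w u]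
  linarith

theorem mul_norm_sub_sq_le_inner {α : ℝ}
    (hstrong : ∀ x xs, IsSubgrad f x xs → ∀ y, f x + ⟪xs, y - x⟫ + α / 2 * ‖y - x‖ ^ 2 ≤ f y)
    {x xs : E} (hx : IsSubgrad f x xs) (hu : IsSubgrad f u w) :
    α * ‖x - u‖ ^ 2 ≤ ⟪xs - w, x - u⟫ := by
  have hxu := hstrong x xs hx u
  have hux := hstrong u w hu x
  rw [← neg_sub x u, norm_neg, inner_neg_right] at hxu
  rw [inner_sub_left]
  linarith

theorem breg_le_of_inner_le {x xs y a : E} {t β : ℝ} (h : IsSubgrad f u (xs - t • a))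
    (ht : 0 ≤ t) (hu : ⟪a, u⟫ = β) (hy : ⟪a, y⟫ ≤ β) :
    Breg f xs x u ≤ Breg f xs x y := by
  have hfy := h y
  have hsplit : ⟪xs - t • a, y - u⟫ = ⟪xs, y - x⟫ - ⟪xs, u - x⟫ - t * (⟪a, y⟫ - β) := by
    rw [inner_sub_left, real_inner_smul_left, inner_sub_right a, hu, inner_sub_right,
      inner_sub_right, inner_sub_right]
    ring
  have hpen : 0 ≤ t * (β - ⟪a, y⟫) := mul_nonneg ht (sub_nonneg.2 hy)
  unfold Breg
  linarith

end IsSubgrad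

theorem HasGradientAt.eq_of_isSubgrad [CompleteSpace E] {φ : E → ℝ} {g p u : E}
    (hg : HasGradientAt φ g p) (h : IsSubgrad φ p u) : g = u := by
  have hmin : IsLocalMin (fun v => φ v - ⟪u, v⟫) p := Eventually.of_forall fun v => by
    have := h v
    rw [inner_sub_right] at this
    dsimp only
    linarith
  have hzero := hmin.hasFDerivAt_eq_zero (hg.hasFDerivAt.sub (innerSL ℝ u).hasFDerivAt)
  have := congrArg (fun L => L (g - u)) hzero
  simp only [sub_apply, InnerProductSpace.toDual_apply_apply, innerSL_apply_apply,
    zero_apply, ← inner_sub_left] at this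
  exact sub_eq_zero.mp (inner_self_eq_zero.mp this)

theorem inner_gradient_eq_of_isMinOn_line [CompleteSpace E] {φ : E → ℝ} {g w a : E} {t₀ β : ℝ}
    (hg : HasGradientAt φ g (w - t₀ • a))
    (hmin : ∀ t : ℝ, φ (w - t₀ • a) + t₀ * β ≤ φ (w - t • a) + t * β) :
    ⟪a, g⟫ = β := by
  have hline : HasDerivAt (fun t : ℝ => w - t • a) (-a) t₀ := by
    simpa using ((hasDerivAt_id t₀).smul_const a).const_sub w
  have hderiv := (hg.hasFDerivAt.comp_hasDerivAt t₀ hline).add ((hasDerivAt_id' t₀).mul_const β)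
  have := IsLocalMin.hasDerivAt_eq_zero (f := fun t => φ (w - t • a) + t * β)
    (Eventually.of_forall hmin) hderiv
  simp only [InnerProductSpace.toDual_apply_apply, inner_neg_right, real_inner_comm a g,
    one_mul] at this
  linarith

theorem exists_isSubgrad_of_quadratic_growth [ProperSpace E] {f : E → ℝ} (hf : Continuous f)
    {α : ℝ} (hα : 0 < α) {x xs : E}
    (hgrowth : ∀ y, f x + ⟪xs, y - x⟫ + α / 2 * ‖y - x‖ ^ 2 ≤ f y) (w : E) :
    ∃ u, IsSubgrad f u w := by
  have hbound :
      ∀ y, f x - ⟪w, x⟫ + ‖y - x‖ * (α / 2 * ‖y - x‖ - ‖xs - w‖) ≤ f y - ⟪w, y⟫ := fun y => by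
    have hcs := real_inner_le_norm (w - xs) (y - x)
    have := hgrowth y
    rw [norm_sub_rev, inner_sub_left, inner_sub_right w] at hcs
    have hexpand : ‖y - x‖ * (α / 2 * ‖y - x‖ - ‖xs - w‖)
        = α / 2 * ‖y - x‖ ^ 2 - ‖xs - w‖ * ‖y - x‖ := by ring
    linarith
  have hquad : Tendsto (fun r : ℝ => f x - ⟪w, x⟫ + r * (α / 2 * r - ‖xs - w‖)) atTop atTop :=
    tendsto_atTop_add_const_left _ _ <| tendsto_id.atTop_mul_atTop₀ <|
      tendsto_atTop_add_const_right _ _ (tendsto_id.const_mul_atTop (half_pos hα))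
  have hcoercive : Tendsto (fun y => f y - ⟪w, y⟫) (cocompact E) atTop := by
    refine tendsto_atTop_mono hbound (hquad.comp ?_)
    simpa [dist_eq_norm] using tendsto_dist_right_cocompact_atTop x
  have hcont : Continuous fun y => f y - ⟪w, y⟫ := by fun_prop
  obtain ⟨u, hu⟩ := hcont.exists_forall_le hcoercive
  refine ⟨u, fun y => ?_⟩
  have := hu y
  rw [inner_sub_right]
  linarith

theorem bregman_projection_halfspace_general {n : ℕ}
    (f : EuclideanSpace ℝ (Fin n) → ℝ)
    (hf : Continuous f)
    (α : ℝ) (hα : 0 < α)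
    (hstrong : ∀ x xs, IsSubgrad f x xs →
      ∀ y, f x + ⟪xs, y - x⟫ + α / 2 * ‖y - x‖ ^ 2 ≤ f y)
    (fstar : EuclideanSpace ℝ (Fin n) → ℝ)
    (hfstar : ∀ xs, IsLUB {r : ℝ | ∃ x, r = ⟪xs, x⟫ - f x} (fstar xs))
    (gradfstar : EuclideanSpace ℝ (Fin n) → EuclideanSpace ℝ (Fin n))
    (hgrad : ∀ xs, HasGradientAt fstar (gradfstar xs) xs)
    (a : EuclideanSpace ℝ (Fin n)) (β : ℝ)
    (x xs : EuclideanSpace ℝ (Fin n)) (hxs : IsSubgrad f x xs)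
    (hx : ¬ (⟪a, x⟫ ≤ β))
    (that : ℝ)
    (hthat : ∀ t : ℝ, fstar (xs - that • a) + that * β ≤ fstar (xs - t • a) + t * β)
    (z : EuclideanSpace ℝ (Fin n))
    (hz : z = gradfstar (xs - that • a)) :
    0 < that ∧ ⟪a, z⟫ ≤ β ∧
    (∀ y, ⟪a, y⟫ ≤ β → Breg f xs x z ≤ Breg f xs x y) := by
  obtain ⟨u, hu⟩ := exists_isSubgrad_of_quadratic_growth hf hα (hstrong x xs hxs) (xs - that • a)
  have hz_sub : IsSubgrad f z (xs - that • a) := by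
    rwa [hz, (hgrad _).eq_of_isSubgrad (hu.isSubgrad_conj hfstar)]
  have haz : ⟪a, z⟫ = β := inner_gradient_eq_of_isMinOn_line (hz ▸ hgrad _) hthat
  have hthat_pos : 0 < that := by
    have hxz : x - z ≠ 0 := fun h => hx (by rw [sub_eq_zero.1 h, haz])
    have hmono := hxs.mul_norm_sub_sq_le_inner hstrong hz_sub
    rw [sub_sub_cancel, real_inner_smul_left, inner_sub_right, haz] at hmono
    have : 0 < α * ‖x - z‖ ^ 2 := by positivity
    exact pos_of_mul_pos_left (this.trans_le hmono) (sub_nonneg.2 (not_le.1 hx).le)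
  exact ⟨hthat_pos, haz.le, fun y hy => hz_sub.breg_le_of_inner_le hthat_pos.le haz hy⟩

/-- Let `z = ∇f*(x* − t̂·a)` be the Bregman projection of `x` onto the
hyperplane `H(a,β)`, obtained via a minimizer `t̂` of `g(t) = f*(x* − t·a) + tβ`.
If `x ∉ H_≤(a,β)`, i.e. `⟨a,x⟩ > β`, then `t̂ > 0` and `z` is also the Bregman
projection of `x` onto the half-space `H_≤(a,β)`. -/
theorem bregman_projection_halfspace {n : ℕ}
    (f : EuclideanSpace ℝ (Fin n) → ℝ)
    (hf : Continuous f) (hconv : ConvexOn ℝ Set.univ f)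
    (α : ℝ) (hα : 0 < α)
    (hstrong : ∀ x xs, IsSubgrad f x xs →
      ∀ y, f x + ⟪xs, y - x⟫ + α / 2 * ‖y - x‖ ^ 2 ≤ f y)
    (fstar : EuclideanSpace ℝ (Fin n) → ℝ)
    (hfstar : ∀ xs, IsLUB {r : ℝ | ∃ x, r = ⟪xs, x⟫ - f x} (fstar xs))
    (gradfstar : EuclideanSpace ℝ (Fin n) → EuclideanSpace ℝ (Fin n))
    (hgrad : ∀ xs, HasGradientAt fstar (gradfstar xs) xs)
    (a : EuclideanSpace ℝ (Fin n)) (ha : a ≠ 0) (β : ℝ)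
    (x xs : EuclideanSpace ℝ (Fin n)) (hxs : IsSubgrad f x xs)
    (hx : ¬ (⟪a, x⟫ ≤ β))
    (that : ℝ)
    (hthat : ∀ t : ℝ, fstar (xs - that • a) + that * β ≤ fstar (xs - t • a) + t * β)
    (z : EuclideanSpace ℝ (Fin n))
    (hz : z = gradfstar (xs - that • a)) :
    0 < that ∧ ⟪a, z⟫ ≤ β ∧
    (∀ y, ⟪a, y⟫ ≤ β → Breg f xs x z ≤ Breg f xs x y) :=
  bregman_projection_halfspace_general f hf α hα hstrong fstar hfstar gradfstar hgrad a β x xs hxs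
    hx that hthat z hz
end

section
/- Let f(x) = λ‖x‖₁ + ½‖x‖₂² with λ > 0 and C₊ = {x ∈ ℝⁿ : x ≥ 0} the positive cone. For any x* ∈ ∂f(x), the Bregman projection of x onto C₊ is z with z_j = x*_j − λ if x*_j > λ and z_j = 0 if x*_j ≤ λ; moreover, the orthogonal projection P_{C₊}(x*) is an admissible subgradient in ∂f(z) satisfying ⟨P_{C₊}(x*) − x*, y − z⟩ ≥ 0 for all y ∈ C₊. -/
open scoped RealInnerProductSpace

/-! A point `z ∈ C` with a subgradient `p ∈ ∂f(z)` such that `⟨p − x*, y − z⟩ ≥ 0` on `C` is a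
Bregman projection, because `D^{x*}(x, y) − D^{x*}(x, z) = f y − f z − ⟨x*, y − z⟩`. For
`f = λ‖·‖₁ + ½‖·‖₂²` everything splits into coordinates, and on a coordinate the shrunk value
`z = max (x* − λ) 0` has subgradient `p = max x* 0`: if `x* > λ` then `p = z + λ`, the derivative
of `λ|t| + t²/2` at `z > 0`, and otherwise `z = 0` and `p ∈ [0, λ]`. -/

theorem breg_le_of_isSubgrad_of_inner_nonneg {E : Type*} [NormedAddCommGroup E]
    [InnerProductSpace ℝ E] {f : E → ℝ} {C : Set E} {xs x z p : E} (hp : IsSubgrad f z p)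
    (hvi : ∀ y ∈ C, 0 ≤ ⟪p - xs, y - z⟫) : ∀ y ∈ C, Breg f xs x z ≤ Breg f xs x y := by
  intro y hy
  have hdiff : Breg f xs x y - Breg f xs x z = f y - f z - ⟪xs, y - z⟫ := by
    have : y - x = (y - z) + (z - x) := by abel
    simp only [Breg, this, inner_add_right]
    ring
  have hsub := hp y
  have hvar := hvi y hy
  rw [inner_sub_left] at hvar
  linarith

theorem isSubgrad_sum_comp_apply {ι : Type*} [Fintype ι] {g : ι → ℝ → ℝ}
    {z p : EuclideanSpace ℝ ι} (h : ∀ i, IsSubgrad (g i) (z i) (p i)) :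
    IsSubgrad (fun v : EuclideanSpace ℝ ι => ∑ i, g i (v i)) z p := by
  intro y
  simp only [PiLp.inner_apply, PiLp.sub_apply, ← Finset.sum_add_distrib]
  exact Finset.sum_le_sum fun i _ => h i (y i)

/-- The hypotheses say `p − z ∈ ∂(λ|·|)(z)`. -/
theorem isSubgrad_mul_abs_add_sq_div_two {lam z p : ℝ} (hbound : |p - z| ≤ lam)
    (hsign : (p - z) * z = lam * |z|) :
    IsSubgrad (fun t : ℝ => lam * |t| + t ^ 2 / 2) z p := by
  intro y
  have habs : (p - z) * y ≤ lam * |y| :=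
    calc (p - z) * y ≤ |p - z| * |y| := by rw [← abs_mul]; exact le_abs_self _
      _ ≤ lam * |y| := mul_le_mul_of_nonneg_right hbound (abs_nonneg y)
  simp only [Real.inner_apply]
  nlinarith [sq_nonneg (y - z)]

theorem isSubgrad_shrink {lam : ℝ} (hlam : 0 ≤ lam) (a : ℝ) :
    IsSubgrad (fun t : ℝ => lam * |t| + t ^ 2 / 2) (if lam < a then a - lam else 0) (max a 0) := by
  split_ifs with ha
  · have ha0 : 0 ≤ a := hlam.trans ha.le
    apply isSubgrad_mul_abs_add_sq_div_two
    · rw [max_eq_left ha0, sub_sub_cancel, abs_of_nonneg hlam]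
    · rw [max_eq_left ha0, sub_sub_cancel, abs_of_nonneg (sub_nonneg.2 ha.le)]
  · apply isSubgrad_mul_abs_add_sq_div_two
    · rw [sub_zero, abs_of_nonneg (le_max_right a 0)]
      exact max_le (not_lt.1 ha) hlam
    · simp

theorem shrink_variational_ineq {lam a y : ℝ} (hlam : 0 ≤ lam) (hy : 0 ≤ y) :
    0 ≤ (max a 0 - a) * (y - if lam < a then a - lam else 0) := by
  split_ifs with ha
  · simp [max_eq_left (hlam.trans ha.le)]
  · exact mul_nonneg (sub_nonneg.2 (le_max_left a 0)) (by simpa using hy)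

theorem bregman_projection_positive_cone_general {n : ℕ} (lam : ℝ) (hlam : 0 < lam)
    (f : EuclideanSpace ℝ (Fin n) → ℝ)
    (hfdef : ∀ x, f x = lam * (∑ i, |x i|) + 1 / 2 * ‖x‖ ^ 2)
    (Cpos : Set (EuclideanSpace ℝ (Fin n)))
    (hCpos : Cpos = {y : EuclideanSpace ℝ (Fin n) | ∀ i, 0 ≤ y i})
    (x xs : EuclideanSpace ℝ (Fin n))
    (z ps : EuclideanSpace ℝ (Fin n))
    (hzdef : ∀ j, z j = if lam < xs j then xs j - lam else 0)
    (hpsdef : ∀ j, ps j = max (xs j) 0) :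
    z ∈ Cpos ∧
    (∀ y ∈ Cpos, Breg f xs x z ≤ Breg f xs x y) ∧
    IsSubgrad f z ps ∧
    (∀ y ∈ Cpos, 0 ≤ ⟪ps - xs, y - z⟫) := by
  subst hCpos
  have hf : f = fun v => ∑ i, (lam * |v i| + v i ^ 2 / 2) := by
    ext v
    rw [hfdef, EuclideanSpace.real_norm_sq_eq, Finset.mul_sum, Finset.mul_sum,
      ← Finset.sum_add_distrib]
    ring_nf
  have hsub : IsSubgrad f z ps := by
    rw [hf]
    exact isSubgrad_sum_comp_apply (g := fun _ t => lam * |t| + t ^ 2 / 2) fun i => by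
      rw [hzdef, hpsdef]; exact isSubgrad_shrink hlam.le (xs i)
  have hvi : ∀ y ∈ {y : EuclideanSpace ℝ (Fin n) | ∀ i, 0 ≤ y i}, 0 ≤ ⟪ps - xs, y - z⟫ := by
    intro y hy
    simp only [PiLp.inner_apply, PiLp.sub_apply, Real.inner_apply]
    exact Finset.sum_nonneg fun i _ => by
      rw [hzdef, hpsdef]; exact shrink_variational_ineq (a := xs i) hlam.le (hy i)
  have hz : ∀ i, 0 ≤ z i := fun i => by
    rw [hzdef]; split_ifs with h <;> linarith
  exact ⟨hz, breg_le_of_isSubgrad_of_inner_nonneg hsub hvi, hsub, hvi⟩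

/-- For `f(x) = λ‖x‖₁ + ½‖x‖₂²` and the positive cone `C₊`, the Bregman
projection of `x` onto `C₊` is `z` with `z_j = x*_j − λ` if `x*_j > λ` and `z_j = 0`
otherwise, and `P_{C₊}(x*)` (the componentwise positive part of `x*`) is an admissible
subgradient in `∂f(z)`. -/
theorem bregman_projection_positive_cone {n : ℕ} (lam : ℝ) (hlam : 0 < lam)
    (f : EuclideanSpace ℝ (Fin n) → ℝ)
    (hfdef : ∀ x, f x = lam * (∑ i, |x i|) + 1 / 2 * ‖x‖ ^ 2)
    (Cpos : Set (EuclideanSpace ℝ (Fin n)))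
    (hCpos : Cpos = {y : EuclideanSpace ℝ (Fin n) | ∀ i, 0 ≤ y i})
    (x xs : EuclideanSpace ℝ (Fin n)) (hxs : IsSubgrad f x xs)
    (z ps : EuclideanSpace ℝ (Fin n))
    (hzdef : ∀ j, z j = if lam < xs j then xs j - lam else 0)
    (hpsdef : ∀ j, ps j = max (xs j) 0) :
    z ∈ Cpos ∧
    (∀ y ∈ Cpos, Breg f xs x z ≤ Breg f xs x y) ∧
    IsSubgrad f z ps ∧
    (∀ y ∈ Cpos, 0 ≤ ⟪ps - xs, y - z⟫) :=
  bregman_projection_positive_cone_general lam hlam f hfdef Cpos hCpos x xs z ps hzdef hpsdef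
end

section
/- Let f(x) = λ‖x‖₁ + ½‖x‖₂² with λ > 0 and B = ∏_{j=1}^n [a_j, b_j] a box containing 0. For x* ∈ ∂f(x), the Bregman projection of x onto B is z = P_B(S_λ(x*)), and an admissible subgradient z* ∈ ∂f(z) is given componentwise by z*_j = x*_j if a_j ≤ (S_λ(x*))_j ≤ b_j, z*_j = b_j + λ if (S_λ(x*))_j > b_j, and z*_j = a_j − λ if (S_λ(x*))_j < a_j. -/
/-!
Write `f y = ∑ⱼ φ (y j)` with `φ t = λ|t| + t²/2`. Since `D^{x*}(x, ·)` differs from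
`f - ⟪x*, ·⟫` by a constant, it is minimised over `B` at any `z ∈ B` having a subgradient
`z* ∈ ∂f(z)` with `⟪z* - x*, y - z⟫ ≥ 0` on `B`; and `g + z ∈ ∂φ(z)` as soon as
`g ∈ λ ∂|·|(z)`, i.e. `|g| ≤ λ` and `g z = λ|z|`.

Coordinatewise, `σ = S_λ(c)` satisfies `c - σ ∈ λ ∂|·|(σ)`. Clamping `σ` to `[a, b]` keeps
`z* - z ∈ λ ∂|·|(z)` because `a ≤ 0 ≤ b`, and when the clamp is active the same condition forces
`σ = c ∓ λ`, so that `z* - c` points out of the box.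
-/

open scoped RealInnerProductSpace

/-- Scalar soft shrinkage `S_λ(t) = max(|t| − λ, 0)·sign(t)`. -/
noncomputable def softShrink (lam t : ℝ) : ℝ := max (|t| - lam) 0 * Real.sign t

theorem IsSubgrad.breg_le {E : Type*} [NormedAddCommGroup E] [InnerProductSpace ℝ E]
    {f : E → ℝ} {x xs z zs y : E} (hz : IsSubgrad f z zs) (hadm : 0 ≤ ⟪zs - xs, y - z⟫) :
    Breg f xs x z ≤ Breg f xs x y := by
  have hy := hz y
  have hsplit : ⟪xs, y - x⟫ = ⟪xs, z - x⟫ + ⟪xs, y - z⟫ := by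
    rw [← inner_add_right, sub_add_sub_cancel']
  rw [inner_sub_left] at hadm
  unfold Breg
  linarith

section EuclideanSpace

variable {ι : Type*} [Fintype ι]

theorem EuclideanSpace.inner_eq_sum_mul (u v : EuclideanSpace ℝ ι) :
    ⟪u, v⟫ = ∑ j, u j * v j := by
  simp only [PiLp.inner_apply, Real.inner_apply]

theorem EuclideanSpace.mul_sum_abs_add_half_norm_sq (lam : ℝ) (y : EuclideanSpace ℝ ι) :
    lam * (∑ j, |y j|) + 1 / 2 * ‖y‖ ^ 2 = ∑ j, (lam * |y j| + y j ^ 2 / 2) := by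
  rw [EuclideanSpace.real_norm_sq_eq, Finset.mul_sum, Finset.mul_sum, ← Finset.sum_add_distrib]
  exact Finset.sum_congr rfl fun j _ => by ring

theorem isSubgrad_sum_coord {φ : ι → ℝ → ℝ} {z zs : EuclideanSpace ℝ ι}
    (h : ∀ j t, φ j (z j) + zs j * (t - z j) ≤ φ j t) :
    IsSubgrad (fun y : EuclideanSpace ℝ ι => ∑ j, φ j (y j)) z zs := fun y => by
  simp only [EuclideanSpace.inner_eq_sum_mul, PiLp.sub_apply, ← Finset.sum_add_distrib]
  exact Finset.sum_le_sum fun j _ => h j (y j)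

end EuclideanSpace

section Scalar

variable {lam a b c σ g z t : ℝ}

theorem mul_abs_add_mul_sub_le (hg : |g| ≤ lam) (hgz : g * z = lam * |z|) :
    lam * |z| + g * (t - z) ≤ lam * |t| := by
  have : g * t ≤ lam * |t| :=
    calc g * t ≤ |g| * |t| := by rw [← abs_mul]; exact le_abs_self _
      _ ≤ lam * |t| := by gcongr
  linarith

theorem mul_abs_add_sq_add_mul_sub_le (hg : |g| ≤ lam) (hgz : g * z = lam * |z|) :
    lam * |z| + z ^ 2 / 2 + (g + z) * (t - z) ≤ lam * |t| + t ^ 2 / 2 := by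
  nlinarith [mul_abs_add_mul_sub_le (t := t) hg hgz, sq_nonneg (t - z)]

theorem abs_sub_softShrink_le (hlam : 0 ≤ lam) : |c - softShrink lam c| ≤ lam := by
  unfold softShrink
  rcases lt_trichotomy c 0 with hc | rfl | hc
  · rw [Real.sign_of_neg hc, abs_of_neg hc, abs_le]
    constructor <;> cases max_cases (-c - lam) 0 <;> linarith
  · simpa using hlam
  · rw [Real.sign_of_pos hc, abs_of_pos hc, abs_le]
    constructor <;> cases max_cases (c - lam) 0 <;> linarith

theorem sub_softShrink_mul_softShrink :
    (c - softShrink lam c) * softShrink lam c = lam * |softShrink lam c| := by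
  unfold softShrink
  rcases lt_trichotomy c 0 with hc | rfl | hc
  · rw [Real.sign_of_neg hc, abs_of_neg hc]
    rcases max_cases (-c - lam) 0 with ⟨h, hle⟩ | ⟨h, _⟩ <;> rw [h]
    · rw [abs_of_nonpos (by linarith)]; ring
    · simp
  · simp
  · rw [Real.sign_of_pos hc, abs_of_pos hc]
    rcases max_cases (c - lam) 0 with ⟨h, hle⟩ | ⟨h, _⟩ <;> rw [h]
    · rw [abs_of_nonneg (by linarith)]; ring
    · simp

noncomputable def clampIcc (a b σ : ℝ) : ℝ := max a (min b σ)

/-- The coordinate `z*_j` of the admissible subgradient, for `c = x*_j` and `σ = S_λ(c)`. -/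
noncomputable def boxSubgrad (lam a b c σ : ℝ) : ℝ :=
  if b < σ then b + lam else if σ < a then a - lam else c

theorem clampIcc_mem_Icc (hab : a ≤ b) : clampIcc a b σ ∈ Set.Icc a b :=
  ⟨le_max_left _ _, max_le hab (min_le_left _ _)⟩

theorem abs_boxSubgrad_sub_clampIcc_le (hab : a ≤ b) (hσ : |c - σ| ≤ lam) :
    |boxSubgrad lam a b c σ - clampIcc a b σ| ≤ lam := by
  have hlam : 0 ≤ lam := (abs_nonneg _).trans hσ
  unfold boxSubgrad clampIcc
  split_ifs with hbσ haσ
  · rw [min_eq_left hbσ.le, max_eq_right hab, add_sub_cancel_left, abs_of_nonneg hlam]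
  · rw [min_eq_right (haσ.trans_le hab).le, max_eq_left haσ.le, sub_sub_cancel_left, abs_neg,
      abs_of_nonneg hlam]
  · rwa [min_eq_right (not_lt.mp hbσ), max_eq_right (not_lt.mp haσ)]

theorem boxSubgrad_sub_clampIcc_mul (ha : a ≤ 0) (hb : 0 ≤ b) (hσ : (c - σ) * σ = lam * |σ|) :
    (boxSubgrad lam a b c σ - clampIcc a b σ) * clampIcc a b σ = lam * |clampIcc a b σ| := by
  unfold boxSubgrad clampIcc
  split_ifs with hbσ haσ
  · rw [min_eq_left hbσ.le, max_eq_right (ha.trans hb), abs_of_nonneg hb]; ring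
  · rw [min_eq_right (haσ.trans_le (ha.trans hb)).le, max_eq_left haσ.le, abs_of_nonpos ha]; ring
  · rwa [min_eq_right (not_lt.mp hbσ), max_eq_right (not_lt.mp haσ)]

theorem boxSubgrad_sub_mul_sub_clampIcc_nonneg (ha : a ≤ 0) (hb : 0 ≤ b)
    (hσ : (c - σ) * σ = lam * |σ|) (hat : a ≤ t) (htb : t ≤ b) :
    0 ≤ (boxSubgrad lam a b c σ - c) * (t - clampIcc a b σ) := by
  unfold boxSubgrad clampIcc
  split_ifs with hbσ haσ
  · have hpos : 0 < σ := hb.trans_lt hbσ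
    have : c - σ = lam := mul_right_cancel₀ hpos.ne' (by rw [hσ, abs_of_pos hpos])
    rw [min_eq_left hbσ.le, max_eq_right (ha.trans hb)]
    nlinarith
  · have hneg : σ < 0 := haσ.trans_le ha
    have : c - σ = -lam := mul_right_cancel₀ hneg.ne (by rw [hσ, abs_of_neg hneg]; ring)
    rw [min_eq_right (haσ.trans_le (ha.trans hb)).le, max_eq_left haσ.le]
    nlinarith
  · simp

end Scalar

theorem bregman_projection_box_general {n : ℕ} (lam : ℝ) (hlam : 0 < lam)
    (f : EuclideanSpace ℝ (Fin n) → ℝ)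
    (hfdef : ∀ x, f x = lam * (∑ i, |x i|) + 1 / 2 * ‖x‖ ^ 2)
    (a b : Fin n → ℝ) (hab : ∀ j, a j ≤ 0 ∧ 0 ≤ b j)  -- box contains 0
    (B : Set (EuclideanSpace ℝ (Fin n)))
    (hB : B = {y : EuclideanSpace ℝ (Fin n) | ∀ j, a j ≤ y j ∧ y j ≤ b j})
    (x xs : EuclideanSpace ℝ (Fin n))
    (z zs : EuclideanSpace ℝ (Fin n))
    (hzdef : ∀ j, z j = max (a j) (min (b j) (softShrink lam (xs j))))  -- z = P_B(S_λ(x*))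
    (hzsdef : ∀ j, zs j =
      if b j < softShrink lam (xs j) then b j + lam
      else if softShrink lam (xs j) < a j then a j - lam
      else xs j) :
    z ∈ B ∧
    (∀ y ∈ B, Breg f xs x z ≤ Breg f xs x y) ∧
    IsSubgrad f z zs ∧
    (∀ y ∈ B, 0 ≤ ⟪zs - xs, y - z⟫) := by
  have hf : f = fun y : EuclideanSpace ℝ (Fin n) => ∑ j, (lam * |y j| + y j ^ 2 / 2) :=
    funext fun y => (hfdef y).trans (EuclideanSpace.mul_sum_abs_add_half_norm_sq lam y)
  have hzB : z ∈ B := by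
    rw [hB]
    exact fun j => hzdef j ▸ clampIcc_mem_Icc ((hab j).1.trans (hab j).2)
  have hsub : IsSubgrad f z zs := by
    rw [hf]
    refine isSubgrad_sum_coord (φ := fun _ t => lam * |t| + t ^ 2 / 2) fun j t => ?_
    have hg : |zs j - z j| ≤ lam := by
      rw [hzdef, hzsdef]
      exact abs_boxSubgrad_sub_clampIcc_le ((hab j).1.trans (hab j).2)
        (abs_sub_softShrink_le hlam.le)
    have hgz : (zs j - z j) * z j = lam * |z j| := by
      rw [hzdef, hzsdef]
      exact boxSubgrad_sub_clampIcc_mul (hab j).1 (hab j).2 sub_softShrink_mul_softShrink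
    simpa using mul_abs_add_sq_add_mul_sub_le (t := t) hg hgz
  have hadm : ∀ y ∈ B, 0 ≤ ⟪zs - xs, y - z⟫ := by
    intro y hy
    rw [hB] at hy
    rw [EuclideanSpace.inner_eq_sum_mul]
    refine Finset.sum_nonneg fun j _ => ?_
    rw [PiLp.sub_apply, PiLp.sub_apply, hzdef, hzsdef]
    exact boxSubgrad_sub_mul_sub_clampIcc_nonneg (hab j).1 (hab j).2
      sub_softShrink_mul_softShrink (hy j).1 (hy j).2
  exact ⟨hzB, fun y hy => hsub.breg_le (hadm y hy), hsub, hadm⟩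

/-- For `f(x) = λ‖x‖₁ + ½‖x‖₂²` and a box `B = ∏ [a_j, b_j]` containing `0`,
the Bregman projection of `x` onto `B` is `z = P_B(S_λ(x*))`, with the stated admissible
subgradient `z* ∈ ∂f(z)`. -/
theorem bregman_projection_box {n : ℕ} (lam : ℝ) (hlam : 0 < lam)
    (f : EuclideanSpace ℝ (Fin n) → ℝ)
    (hfdef : ∀ x, f x = lam * (∑ i, |x i|) + 1 / 2 * ‖x‖ ^ 2)
    (a b : Fin n → ℝ) (hab : ∀ j, a j ≤ 0 ∧ 0 ≤ b j)  -- box contains 0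
    (B : Set (EuclideanSpace ℝ (Fin n)))
    (hB : B = {y : EuclideanSpace ℝ (Fin n) | ∀ j, a j ≤ y j ∧ y j ≤ b j})
    (x xs : EuclideanSpace ℝ (Fin n)) (hxs : IsSubgrad f x xs)
    (z zs : EuclideanSpace ℝ (Fin n))
    (hzdef : ∀ j, z j = max (a j) (min (b j) (softShrink lam (xs j))))  -- z = P_B(S_λ(x*))
    (hzsdef : ∀ j, zs j =
      if b j < softShrink lam (xs j) then b j + lam
      else if softShrink lam (xs j) < a j then a j - lam
      else xs j) :
    z ∈ B ∧
    (∀ y ∈ B, Breg f xs x z ≤ Breg f xs x y) ∧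
    IsSubgrad f z zs ∧
    (∀ y ∈ B, 0 ≤ ⟪zs - xs, y - z⟫) :=
  bregman_projection_box_general lam hlam f hfdef a b hab B hB x xs z zs hzdef hzsdef
end

section
/- Let A ∈ ℝ^{m×n}, Q ⊂ ℝᵐ nonempty closed convex, C_Q = {x ∈ ℝⁿ : Ax ∈ Q}, and suppose x̃ ∉ C_Q. Set w := Ax̃ − P_Q(Ax̃) and β := ⟨Aᵀw, x̃⟩ − ‖w‖₂². Then Aᵀw ≠ 0, ⟨Aᵀw, x̃⟩ > β, and C_Q ⊆ {x : ⟨Aᵀw, x⟩ ≤ β}; i.e., the hyperplane {x : ⟨Aᵀw, x⟩ = β} strictly separates x̃ from C_Q. -/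
open scoped RealInnerProductSpace

/-! The residual `w = A x̃ - P_Q(A x̃)` is a normal vector to `Q` at the projection, so
`⟪w, q⟫ ≤ ⟪w, P_Q(A x̃)⟫` on `Q`; pulling back through `A` by the adjoint gives
`⟪Aᵀw, x⟫ ≤ β` on `C_Q`, and `β` is `⟪Aᵀw, x̃⟫ - ‖w‖²` with `‖w‖ > 0` since `A x̃ ∉ Q`.
If `Aᵀw` vanished, a point of `C_Q` would give `0 ≤ β = -‖w‖² < 0`. -/

section

variable {E F : Type*} [NormedAddCommGroup E] [InnerProductSpace ℝ E]
  [NormedAddCommGroup F] [InnerProductSpace ℝ F]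

theorem real_inner_sub_sub_nonpos_of_forall_norm_sub_le {K : Set F} (hK : Convex ℝ K)
    {u p : F} (hp : p ∈ K) (hmin : ∀ q ∈ K, ‖u - p‖ ≤ ‖u - q‖) :
    ∀ q ∈ K, ⟪u - p, q - p⟫ ≤ 0 := by
  have : Nonempty K := ⟨⟨p, hp⟩⟩
  refine (norm_eq_iInf_iff_real_inner_le_zero hK hp).mp (le_antisymm ?_ ?_)
  · exact le_ciInf fun q => hmin q q.2
  · exact ciInf_le ⟨0, fun _ ⟨_, h⟩ => h ▸ norm_nonneg _⟩ (⟨p, hp⟩ : K)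

variable [CompleteSpace E] [CompleteSpace F]

theorem real_inner_adjoint_sub_le_of_forall_norm_sub_le (A : E →L[ℝ] F) {K : Set F}
    (hK : Convex ℝ K) {xt : E} {p : F} (hp : p ∈ K)
    (hmin : ∀ q ∈ K, ‖A xt - p‖ ≤ ‖A xt - q‖) {x : E} (hx : A x ∈ K) :
    ⟪A.adjoint (A xt - p), x⟫ ≤ ⟪A.adjoint (A xt - p), xt⟫ - ‖A xt - p‖ ^ 2 := by
  have hnormal := real_inner_sub_sub_nonpos_of_forall_norm_sub_le hK hp hmin (A x) hx
  have hβ : ⟪A.adjoint (A xt - p), xt⟫ - ‖A xt - p‖ ^ 2 = ⟪A xt - p, p⟫ := by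
    rw [A.adjoint_inner_left, ← real_inner_self_eq_norm_sq, ← inner_sub_right, sub_sub_cancel]
  rw [hβ, A.adjoint_inner_left]
  rw [inner_sub_right] at hnormal
  linarith

end

theorem separating_hyperplane_general {n m : ℕ}
    (A : EuclideanSpace ℝ (Fin n) →L[ℝ] EuclideanSpace ℝ (Fin m))
    (Q : Set (EuclideanSpace ℝ (Fin m)))
    (hQconv : Convex ℝ Q)
    (hCQ : ∃ x, A x ∈ Q)  -- C_Q nonempty
    (xt : EuclideanSpace ℝ (Fin n))
    (hxt : A xt ∉ Q)
    (p : EuclideanSpace ℝ (Fin m))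
    (hp : p ∈ Q ∧ ∀ q ∈ Q, ‖A xt - p‖ ≤ ‖A xt - q‖)  -- p = P_Q(A x̃)
    (w : EuclideanSpace ℝ (Fin m)) (hw : w = A xt - p)
    (β : ℝ) (hβ : β = ⟪ContinuousLinearMap.adjoint A w, xt⟫ - ‖w‖ ^ 2) :
    ContinuousLinearMap.adjoint A w ≠ 0 ∧
    β < ⟪ContinuousLinearMap.adjoint A w, xt⟫ ∧
    (∀ x, A x ∈ Q → ⟪ContinuousLinearMap.adjoint A w, x⟫ ≤ β) := by
  have hw_ne : w ≠ 0 := by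
    rw [hw, sub_ne_zero]
    exact fun h => hxt (h ▸ hp.1)
  have hw_pos : 0 < ‖w‖ ^ 2 := by positivity
  have hsep : ∀ x, A x ∈ Q → ⟪A.adjoint w, x⟫ ≤ β := fun x hx => by
    subst hw hβ
    exact real_inner_adjoint_sub_le_of_forall_norm_sub_le A hQconv hp.1 hp.2 hx
  refine ⟨fun h0 => ?_, by linarith, hsep⟩
  obtain ⟨x₀, hx₀⟩ := hCQ
  have h := hsep x₀ hx₀
  rw [hβ, h0, inner_zero_left, inner_zero_left] at h
  linarith

/-- If `x̃ ∉ C_Q = {x : Ax ∈ Q}` (with `C_Q` nonempty, `Q` nonempty closed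
convex) and `w := Ax̃ − P_Q(Ax̃)`, `β := ⟨Aᵀw, x̃⟩ − ‖w‖²`, then `Aᵀw ≠ 0`,
`⟨Aᵀw, x̃⟩ > β`, and `C_Q ⊆ {x : ⟨Aᵀw, x⟩ ≤ β}`: the hyperplane `{⟨Aᵀw, ·⟩ = β}`
separates `x̃` from `C_Q`. -/
theorem separating_hyperplane {n m : ℕ}
    (A : EuclideanSpace ℝ (Fin n) →L[ℝ] EuclideanSpace ℝ (Fin m))
    (Q : Set (EuclideanSpace ℝ (Fin m)))
    (hQ : Q.Nonempty) (hQclosed : IsClosed Q) (hQconv : Convex ℝ Q)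
    (hCQ : ∃ x, A x ∈ Q)  -- C_Q nonempty
    (xt : EuclideanSpace ℝ (Fin n))
    (hxt : A xt ∉ Q)
    (p : EuclideanSpace ℝ (Fin m))
    (hp : p ∈ Q ∧ ∀ q ∈ Q, ‖A xt - p‖ ≤ ‖A xt - q‖)  -- p = P_Q(A x̃)
    (w : EuclideanSpace ℝ (Fin m)) (hw : w = A xt - p)
    (β : ℝ) (hβ : β = ⟪ContinuousLinearMap.adjoint A w, xt⟫ - ‖w‖ ^ 2) :
    ContinuousLinearMap.adjoint A w ≠ 0 ∧
    β < ⟪ContinuousLinearMap.adjoint A w, xt⟫ ∧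
    (∀ x, A x ∈ Q → ⟪ContinuousLinearMap.adjoint A w, x⟫ ≤ β) :=
  separating_hyperplane_general A Q hQconv hCQ xt hxt p hp w hw β hβ
end

section
/- Let f be strongly convex with modulus α, x*_{k−1} ∈ ℝⁿ, a = Aᵀw ≠ 0 for some w ∈ ℝᵐ, A ∈ ℝ^{m×n}, and β = ⟨a, x_{k−1}⟩ − ‖w‖₂² where x_{k−1} = ∇f*(x*_{k−1}). Define g(t) = f*(x*_{k−1} − t·a) + tβ. Then g'(0) = −‖w‖₂², and for every t ≥ 0: g'(t) ≤ (t/α)‖a‖₂² − ‖w‖₂². In particular the dynamic stepsize t̃ = α‖w‖₂²/‖a‖₂² satisfies g'(t̃) ≤ 0. -/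
open scoped RealInnerProductSpace

/-!
Along the ray `t ↦ x*_{k−1} − t a` the chain rule gives
`g'(t) = ⟪a, ∇f*(x*_{k−1}) − ∇f*(x*_{k−1} − t a)⟫ − ‖w‖²`, which is `−‖w‖²` at `t = 0`.
By Cauchy–Schwarz and the `1/α`-Lipschitz continuity of `∇f*` the inner product is at most
`(t/α)‖a‖²`, which at `t̃ = α‖w‖²/‖a‖²` is at most `‖w‖²`.
-/

section

variable {E : Type*} [NormedAddCommGroup E] [InnerProductSpace ℝ E]

theorem HasGradientAt.hasDerivAt_comp_sub_smul [CompleteSpace E] {f : E → ℝ} {f' x a : E} {t : ℝ}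
    (hf : HasGradientAt f f' (x - t • a)) :
    HasDerivAt (fun s : ℝ => f (x - s • a)) (-⟪a, f'⟫) t := by
  have hline : HasDerivAt (fun s : ℝ => x - s • a) (-a) t := by
    simpa using ((hasDerivAt_id t).smul_const a).const_sub x
  refine (hf.hasFDerivAt.comp_hasDerivAt t hline).congr_deriv ?_
  rw [InnerProductSpace.toDual_apply_apply, inner_neg_right, real_inner_comm]

theorem inner_sub_apply_sub_smul_le {G : E → E} {L : ℝ}
    (hG : ∀ u v, ‖G u - G v‖ ≤ L * ‖u - v‖) (x a : E) {t : ℝ} (ht : 0 ≤ t) :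
    ⟪a, G x - G (x - t • a)⟫ ≤ t * L * ‖a‖ ^ 2 :=
  calc ⟪a, G x - G (x - t • a)⟫
      ≤ ‖a‖ * ‖G x - G (x - t • a)‖ := real_inner_le_norm _ _
    _ ≤ ‖a‖ * (L * ‖x - (x - t • a)‖) := mul_le_mul_of_nonneg_left (hG _ _) (norm_nonneg a)
    _ = t * L * ‖a‖ ^ 2 := by
      rw [sub_sub_cancel, norm_smul, Real.norm_of_nonneg ht]; ring

end

theorem div_mul_le_of_nonneg {K : Type*} [Field K] [LinearOrder K] [IsStrictOrderedRing K]
    {a b : K} (ha : 0 ≤ a) : a / b * b ≤ a := by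
  rcases eq_or_ne b 0 with rfl | hb
  · simpa using ha
  · rw [div_mul_cancel₀ a hb]

theorem linesearch_derivative_bounds_general {n m : ℕ}
    (fstar : EuclideanSpace ℝ (Fin n) → ℝ)
    (gradfstar : EuclideanSpace ℝ (Fin n) → EuclideanSpace ℝ (Fin n))
    (hgrad : ∀ u, HasGradientAt fstar (gradfstar u) u)
    (α : ℝ) (hα : 0 < α)
    (hlip : ∀ u v, ‖gradfstar u - gradfstar v‖ ≤ (1 / α) * ‖u - v‖)
    (w : EuclideanSpace ℝ (Fin m))
    (a : EuclideanSpace ℝ (Fin n))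
    (xks : EuclideanSpace ℝ (Fin n))  -- x*_{k−1}
    (β : ℝ) (hβ : β = ⟪a, gradfstar xks⟫ - ‖w‖ ^ 2)
    (g : ℝ → ℝ) (hg : ∀ t, g t = fstar (xks - t • a) + t * β) :
    HasDerivAt g (-‖w‖ ^ 2) 0 ∧
    (∀ t : ℝ, 0 ≤ t → deriv g t ≤ t / α * ‖a‖ ^ 2 - ‖w‖ ^ 2) ∧
    deriv g (α * ‖w‖ ^ 2 / ‖a‖ ^ 2) ≤ 0 := by
  have hderiv : ∀ t : ℝ,
      HasDerivAt g (⟪a, gradfstar xks - gradfstar (xks - t • a)⟫ - ‖w‖ ^ 2) t := by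
    intro t
    rw [funext hg]
    refine ((hgrad (xks - t • a)).hasDerivAt_comp_sub_smul.add
      ((hasDerivAt_id t).mul_const β)).congr_deriv ?_
    rw [hβ, inner_sub_right, one_mul]; ring
  have hbound (t : ℝ) (ht : 0 ≤ t) : deriv g t ≤ t / α * ‖a‖ ^ 2 - ‖w‖ ^ 2 := by
    rw [(hderiv t).deriv]
    have hinner := inner_sub_apply_sub_smul_le hlip xks a ht
    rw [mul_one_div] at hinner
    linarith
  refine ⟨by simpa using hderiv 0, hbound, ?_⟩
  have hstep := hbound (α * ‖w‖ ^ 2 / ‖a‖ ^ 2) (by positivity)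
  have hcancel : α * ‖w‖ ^ 2 / ‖a‖ ^ 2 / α * ‖a‖ ^ 2 ≤ ‖w‖ ^ 2 := by
    rw [mul_div_assoc, mul_div_cancel_left₀ _ hα.ne']
    exact div_mul_le_of_nonneg (by positivity)
  linarith

/-- With `a = Aᵀw ≠ 0`, `x_{k−1} = ∇f*(x*_{k−1})`,
`β = ⟨a, x_{k−1}⟩ − ‖w‖²` and `g(t) = f*(x*_{k−1} − t·a) + tβ`, one has `g'(0) = −‖w‖²`,
`g'(t) ≤ (t/α)‖a‖² − ‖w‖²` for all `t ≥ 0`, and in particular the dynamic stepsize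
`t̃ = α‖w‖²/‖a‖²` satisfies `g'(t̃) ≤ 0`. -/
theorem linesearch_derivative_bounds {n m : ℕ}
    (fstar : EuclideanSpace ℝ (Fin n) → ℝ)
    (gradfstar : EuclideanSpace ℝ (Fin n) → EuclideanSpace ℝ (Fin n))
    (hgrad : ∀ u, HasGradientAt fstar (gradfstar u) u)
    (α : ℝ) (hα : 0 < α)
    (hlip : ∀ u v, ‖gradfstar u - gradfstar v‖ ≤ (1 / α) * ‖u - v‖)
    (A : EuclideanSpace ℝ (Fin n) →L[ℝ] EuclideanSpace ℝ (Fin m))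
    (w : EuclideanSpace ℝ (Fin m))
    (a : EuclideanSpace ℝ (Fin n)) (hadef : a = ContinuousLinearMap.adjoint A w)
    (ha : a ≠ 0)
    (xks : EuclideanSpace ℝ (Fin n))  -- x*_{k−1}
    (β : ℝ) (hβ : β = ⟪a, gradfstar xks⟫ - ‖w‖ ^ 2)
    (g : ℝ → ℝ) (hg : ∀ t, g t = fstar (xks - t • a) + t * β) :
    HasDerivAt g (-‖w‖ ^ 2) 0 ∧
    (∀ t : ℝ, 0 ≤ t → deriv g t ≤ t / α * ‖a‖ ^ 2 - ‖w‖ ^ 2) ∧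
    deriv g (α * ‖w‖ ^ 2 / ‖a‖ ^ 2) ≤ 0 :=
  linesearch_derivative_bounds_general fstar gradfstar hgrad α hα hlip w a xks β hβ g hg
end
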